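/- arXiv:2507.07365 — 14 statements merged into one kernel-verified Lean document; each statement's English description precedes it below -/
import Mathlib

section
/- For every real α with 1 < α, the function f₃ : [0,1] → ℝ defined by f₃(x) = (1 − √x)^(1/α) + (1 + √x)^(1/α) is monotonically decreasing (antitone) on the interval [0,1]. -/
open Real Set

lemma key_spread {p a b : ℝ} (hp0 : 0 < p) (hp1 : p < 1) (ha : 0 ≤ a) (hab : a ≤ b)
    (hb1 : b ≤ 1) :
    (1 - b) ^ p + (1 + b) ^ p ≤ (1 - a) ^ p + (1 + a) ^ p := by
  rcases eq_or_lt_of_le hab with rfl | hab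
  · exact le_refl _
  · have hb0 : 0 < b := lt_of_le_of_lt ha hab
    have hcc := Real.concaveOn_rpow hp0.le hp1.le
    set lam : ℝ := (b + a) / (2 * b) with hlam
    set mu : ℝ := (b - a) / (2 * b) with hmu
    have hlam0 : 0 ≤ lam := by positivity
    have hmu0 : 0 ≤ mu := by apply div_nonneg <;> linarith
    have hsum : lam + mu = 1 := by rw [hlam, hmu, ← add_div, div_eq_one_iff_eq (by positivity)]; ring
    have h1b : (1 : ℝ) - b ∈ Ici (0:ℝ) := by simp; linarith
    have h2b : (1 : ℝ) + b ∈ Ici (0:ℝ) := by simp; linarith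
    have c1 := hcc.2 h1b h2b hlam0 hmu0 hsum
    have c2 := hcc.2 h2b h1b hlam0 hmu0 hsum
    simp only [smul_eq_mul] at c1 c2
    rw [show lam * (1 - b) + mu * (1 + b) = 1 - a by rw [hlam, hmu, div_mul_eq_mul_div, div_mul_eq_mul_div, ← add_div, div_eq_iff (by positivity)]; ring] at c1
    rw [show lam * (1 + b) + mu * (1 - b) = 1 + a by rw [hlam, hmu, div_mul_eq_mul_div, div_mul_eq_mul_div, ← add_div, div_eq_iff (by positivity)]; ring] at c2
    calc (1 - b) ^ p + (1 + b) ^ p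
        = (lam + mu) * ((1 - b) ^ p + (1 + b) ^ p) := by rw [hsum]; ring
      _ = (lam * (1 - b) ^ p + mu * (1 + b) ^ p) + (lam * (1 + b) ^ p + mu * (1 - b) ^ p) := by
          ring
      _ ≤ (1 - a) ^ p + (1 + a) ^ p := add_le_add c1 c2

theorem f3_antitone (α : ℝ) (hα : 1 < α) :
    AntitoneOn (fun x : ℝ => (1 - Real.sqrt x) ^ (1 / α) + (1 + Real.sqrt x) ^ (1 / α))
      (Set.Icc 0 1) := by
  have hp0 : 0 < 1 / α := by positivity
  have hp1 : 1 / α < 1 := by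
    rw [div_lt_one (by linarith)]; linarith
  intro x hx y hy hxy
  simp only
  have hsx : 0 ≤ Real.sqrt x := Real.sqrt_nonneg x
  have hsxy : Real.sqrt x ≤ Real.sqrt y := Real.sqrt_le_sqrt hxy
  have hsy1 : Real.sqrt y ≤ 1 := by
    rw [show (1:ℝ) = Real.sqrt 1 by simp]
    exact Real.sqrt_le_sqrt hy.2
  exact key_spread hp0 hp1 hsx hsxy hsy1
end

section
/- For every real α with 1 < α, the function f₁ : [0,1] → ℝ defined by f₁(x) = ((1 − √x)^(1/α) + (1 + √x)^(1/α))^α is monotonically decreasing (antitone) on the interval [0,1]. -/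
lemma concave_pair (p : ℝ) (hp0 : 0 < p) (hp1 : p < 1) {s t : ℝ} (hs : 0 ≤ s)
    (hst : s ≤ t) (ht : t ≤ 1) :
    (1 - t) ^ p + (1 + t) ^ p ≤ (1 - s) ^ p + (1 + s) ^ p := by
  rcases eq_or_lt_of_le (hs.trans hst) with h0 | h0
  · have hs0 : s = 0 := le_antisymm (hst.trans h0.symm.le) hs
    simp [hs0, ← h0]
  · have hconc := (Real.strictConcaveOn_rpow hp0 hp1).concaveOn
    set μ : ℝ := (t - s) / (2 * t) with hμ
    have hμ0 : 0 ≤ μ := div_nonneg (by linarith) (by linarith)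
    have hμ1 : μ ≤ 1 := by
      rw [div_le_one (by linarith)]; linarith
    have ha : (1 - t) ∈ Set.Ici (0:ℝ) := by simp; linarith
    have hz : (1 + t) ∈ Set.Ici (0:ℝ) := by simp; linarith
    have e1 : (1 - μ) * (1 - t) + μ * (1 + t) = 1 - s := by
      field_simp [hμ]
      have hm := div_mul_cancel₀ (t - s) (ne_of_gt (by linarith : (0:ℝ) < 2 * t))
      rw [← hμ] at hm
      linarith
    have e2 : μ * (1 - t) + (1 - μ) * (1 + t) = 1 + s := by
      field_simp [hμ]
      have hm := div_mul_cancel₀ (t - s) (ne_of_gt (by linarith : (0:ℝ) < 2 * t))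
      rw [← hμ] at hm
      linarith
    have h1 := hconc.2 ha hz (by linarith : (0:ℝ) ≤ 1 - μ) hμ0 (by ring)
    have h2 := hconc.2 ha hz hμ0 (by linarith : (0:ℝ) ≤ 1 - μ) (by ring)
    simp only [smul_eq_mul] at h1 h2
    rw [e1] at h1
    rw [e2] at h2
    nlinarith [h1, h2]

theorem f1_antitone (α : ℝ) (hα : 1 < α) :
    AntitoneOn (fun x : ℝ => ((1 - Real.sqrt x) ^ (1 / α) + (1 + Real.sqrt x) ^ (1 / α)) ^ α)
      (Set.Icc 0 1) := by
  intro x hx y hy hxy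
  simp only
  have hsx : Real.sqrt x ≤ 1 := Real.sqrt_le_one.mpr hx.2
  have hsy : Real.sqrt y ≤ 1 := Real.sqrt_le_one.mpr hy.2
  have h0x : (0:ℝ) ≤ Real.sqrt x := Real.sqrt_nonneg x
  have h0y : (0:ℝ) ≤ Real.sqrt y := Real.sqrt_nonneg y
  have hst : Real.sqrt x ≤ Real.sqrt y := Real.sqrt_le_sqrt hxy
  have hp0 : 0 < 1/α := by positivity
  have hp1 : 1/α < 1 := by rw [div_lt_one (by linarith)]; linarith
  apply Real.rpow_le_rpow
  · exact add_nonneg (Real.rpow_nonneg (by linarith) _) (Real.rpow_nonneg (by linarith) _)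
  · exact concave_pair _ hp0 hp1 h0x hst hsy
  · linarith
end

section
/- For every real α with 1 < α < 2, the function f₂ : [0,1] → ℝ defined by f₂(x) = (1 − √x)^(2−α) + (1 + √x)^(2−α) is monotonically decreasing (antitone) on the interval [0,1]. -/
open Real

lemma g_antitone (r : ℝ) (hr0 : 0 < r) (hr1 : r < 1) :
    AntitoneOn (fun t : ℝ => (1 - t) ^ r + (1 + t) ^ r) (Set.Icc 0 1) := by
  have hcont : ContinuousOn (fun t : ℝ => (1 - t) ^ r + (1 + t) ^ r) (Set.Icc 0 1) := by
    apply ContinuousOn.add <;>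
    · intro t _
      apply ContinuousAt.continuousWithinAt
      exact (Real.continuousAt_rpow_const _ _ (Or.inr hr0.le)).comp (by fun_prop)
  apply antitoneOn_of_deriv_nonpos (convex_Icc 0 1) hcont
  · intro t ht
    rw [interior_Icc] at ht
    have h1 : (0:ℝ) < 1 - t := by linarith [ht.2]
    have h2 : (0:ℝ) < 1 + t := by linarith [ht.1]
    have hd : HasDerivAt (fun t : ℝ => (1 - t) ^ r + (1 + t) ^ r)
        (r * (1 - t) ^ (r - 1) * -1 + r * (1 + t) ^ (r - 1) * 1) t := by
      simpa [Function.comp_def, Pi.add_def] using (((Real.hasDerivAt_rpow_const (p := r) (Or.inl h1.ne')).comp t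
        (((hasDerivAt_id t).const_sub 1)))).add
        ((Real.hasDerivAt_rpow_const (p := r) (Or.inl h2.ne')).comp t
        (((hasDerivAt_id t).const_add 1)))
    exact hd.differentiableAt.differentiableWithinAt
  · intro t ht
    rw [interior_Icc] at ht
    have h1 : (0:ℝ) < 1 - t := by linarith [ht.2]
    have h2 : (0:ℝ) < 1 + t := by linarith [ht.1]
    have hd : HasDerivAt (fun t : ℝ => (1 - t) ^ r + (1 + t) ^ r)
        (r * (1 - t) ^ (r - 1) * -1 + r * (1 + t) ^ (r - 1) * 1) t := by
      simpa [Function.comp_def, Pi.add_def] using (((Real.hasDerivAt_rpow_const (p := r) (Or.inl h1.ne')).comp t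
        (((hasDerivAt_id t).const_sub 1)))).add
        ((Real.hasDerivAt_rpow_const (p := r) (Or.inl h2.ne')).comp t
        (((hasDerivAt_id t).const_add 1)))
    rw [hd.deriv]
    have hle : (1 + t) ^ (r - 1) ≤ (1 - t) ^ (r - 1) :=
      Real.rpow_le_rpow_of_nonpos h1 (by linarith [ht.1]) (by linarith)
    have hrpos := hr0
    nlinarith [Real.rpow_nonneg h1.le (r-1), Real.rpow_nonneg h2.le (r-1)]

theorem f2_antitone (α : ℝ) (hα1 : 1 < α) (hα2 : α < 2) :
    AntitoneOn (fun x : ℝ => (1 - Real.sqrt x) ^ (2 - α) + (1 + Real.sqrt x) ^ (2 - α))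
      (Set.Icc 0 1) := by
  have hr0 : 0 < 2 - α := by linarith
  have hr1 : 2 - α < 1 := by linarith
  have hg := g_antitone (2 - α) hr0 hr1
  intro a ha b hb hab
  refine hg ?_ ?_ (Real.sqrt_le_sqrt hab)
  · exact ⟨Real.sqrt_nonneg _, Real.sqrt_le_one.mpr ha.2⟩
  · exact ⟨Real.sqrt_nonneg _, Real.sqrt_le_one.mpr hb.2⟩
end

section
/- For every real α with 1 < α, the function f₃ : [0,1] → ℝ defined by f₃(x) = (1 − √x)^(1/α) + (1 + √x)^(1/α) is concave on the interval [0,1]. -/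
open Real

/-- Auxiliary: for `1 < q` and `s ∈ [0,1]`, `(1+qs)(1-s)^q - (1-qs)(1+s)^q ≥ 0`. -/
private lemma psi_nonneg {q : ℝ} (hq1 : 1 < q) {s : ℝ} (hs0 : 0 ≤ s) (hs1 : s ≤ 1) :
    0 ≤ (1 + q * s) * (1 - s) ^ q - (1 - q * s) * (1 + s) ^ q := by
  have hq0 : (0:ℝ) < q := by linarith
  set ψ : ℝ → ℝ := fun t => (1 + q * t) * (1 - t) ^ q - (1 - q * t) * (1 + t) ^ q with hψdef
  set ψ' : ℝ → ℝ := fun t =>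
    (q * 1 * ((1 - t) ^ q) + (1 + q * t) * (-1 * q * (1 - t) ^ (q - 1)))
      - (-(q * 1) * ((1 + t) ^ q) + (1 - q * t) * (1 * q * (1 + t) ^ (q - 1))) with hψ'def
  have hcont : Continuous ψ := by
    have c1 : Continuous fun t : ℝ => (1 - t) ^ q :=
      (continuous_const.sub continuous_id).rpow_const fun x => Or.inr hq0.le
    have c2 : Continuous fun t : ℝ => (1 + t) ^ q :=
      (continuous_const.add continuous_id).rpow_const fun x => Or.inr hq0.le
    exact ((continuous_const.add (continuous_const.mul continuous_id)).mul c1).sub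
      ((continuous_const.sub (continuous_const.mul continuous_id)).mul c2)
  have hderiv : ∀ t ∈ Set.Ioo (0:ℝ) 1, HasDerivAt ψ (ψ' t) t := by
    intro t ht
    have h1t : (0:ℝ) < 1 - t := by linarith [ht.2]
    have h2t : (0:ℝ) < 1 + t := by linarith [ht.1]
    have d1 : HasDerivAt (fun y : ℝ => (1 - y) ^ q) (-1 * q * (1 - t) ^ (q - 1)) t :=
      ((hasDerivAt_id t).const_sub 1).rpow_const (Or.inl h1t.ne')
    have d2 : HasDerivAt (fun y : ℝ => (1 + y) ^ q) (1 * q * (1 + t) ^ (q - 1)) t :=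
      ((hasDerivAt_id t).const_add 1).rpow_const (Or.inl h2t.ne')
    have a1 : HasDerivAt (fun y : ℝ => 1 + q * y) (q * 1) t :=
      ((hasDerivAt_id t).const_mul q).const_add 1
    have a2 : HasDerivAt (fun y : ℝ => 1 - q * y) (-(q * 1)) t :=
      ((hasDerivAt_id t).const_mul q).const_sub 1
    exact (a1.mul d1).sub (a2.mul d2)
  have hmono : MonotoneOn ψ (Set.Icc 0 1) := by
    apply monotoneOn_of_hasDerivWithinAt_nonneg (f' := ψ') (convex_Icc 0 1)
      hcont.continuousOn
    · intro t ht
      rw [interior_Icc] at ht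
      exact (hderiv t ht).hasDerivWithinAt
    · intro t ht
      rw [interior_Icc] at ht
      have h1t : (0:ℝ) < 1 - t := by linarith [ht.2]
      have h2t : (0:ℝ) < 1 + t := by linarith [ht.1]
      have e1 : (1 - t) ^ q = (1 - t) ^ (q - 1) * (1 - t) := by
        rw [← Real.rpow_add_one h1t.ne' (q - 1), sub_add_cancel]
      have e2 : (1 + t) ^ q = (1 + t) ^ (q - 1) * (1 + t) := by
        rw [← Real.rpow_add_one h2t.ne' (q - 1), sub_add_cancel]
      have hAB : (1 - t) ^ (q - 1) ≤ (1 + t) ^ (q - 1) :=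
        Real.rpow_le_rpow h1t.le (by linarith [ht.1]) (by linarith)
      have hprod : 0 ≤ q * (q + 1) * t * ((1 + t) ^ (q - 1) - (1 - t) ^ (q - 1)) := by
        have hqt : (0:ℝ) ≤ q * (q + 1) * t :=
          mul_nonneg (mul_nonneg hq0.le (by linarith)) ht.1.le
        exact mul_nonneg hqt (sub_nonneg.mpr hAB)
      simp only [hψ'def]
      rw [e1, e2]
      nlinarith [hprod]
  have h0 : ψ 0 ≤ ψ s := hmono (Set.mem_Icc.mpr ⟨le_refl 0, zero_le_one⟩)
    (Set.mem_Icc.mpr ⟨hs0, hs1⟩) hs0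
  have hψ0 : ψ 0 = 0 := by simp [hψdef]
  have := h0
  rw [hψ0] at this
  simpa [hψdef] using this

/-- Key inequality for the second derivative sign. -/
private lemma key_ineq {p s : ℝ} (hp0 : 0 < p) (hp1 : p < 1) (hs0 : 0 < s) (hs1 : s < 1) :
    (p - 1) * s * ((1 + s) ^ (p - 2) + (1 - s) ^ (p - 2))
      ≤ (1 + s) ^ (p - 1) - (1 - s) ^ (p - 1) := by
  have h1s : (0:ℝ) < 1 - s := by linarith
  have h2s : (0:ℝ) < 1 + s := by linarith
  have hψ := psi_nonneg (q := 2 - p) (by linarith) hs0.le hs1.le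
  have e1 : (1 + s) ^ (p - 1) * (1 + s) ^ (2 - p) = 1 + s := by
    rw [← Real.rpow_add h2s]
    have : p - 1 + (2 - p) = 1 := by ring
    rw [this, Real.rpow_one]
  have e2 : (1 - s) ^ (p - 1) * (1 - s) ^ (2 - p) = 1 - s := by
    rw [← Real.rpow_add h1s]
    have : p - 1 + (2 - p) = 1 := by ring
    rw [this, Real.rpow_one]
  have e3 : (1 + s) ^ (p - 2) * (1 + s) ^ (2 - p) = 1 := by
    rw [← Real.rpow_add h2s]
    have : p - 2 + (2 - p) = 0 := by ring
    rw [this, Real.rpow_zero]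
  have e4 : (1 - s) ^ (p - 2) * (1 - s) ^ (2 - p) = 1 := by
    rw [← Real.rpow_add h1s]
    have : p - 2 + (2 - p) = 0 := by ring
    rw [this, Real.rpow_zero]
  have hX : (0:ℝ) < (1 - s) ^ (2 - p) := Real.rpow_pos_of_pos h1s _
  have hY : (0:ℝ) < (1 + s) ^ (2 - p) := Real.rpow_pos_of_pos h2s _
  rw [← sub_nonneg]
  have hT : ((1 + s) ^ (p - 1) - (1 - s) ^ (p - 1)
        - (p - 1) * s * ((1 + s) ^ (p - 2) + (1 - s) ^ (p - 2)))
        * ((1 - s) ^ (2 - p) * (1 + s) ^ (2 - p))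
      = (1 + (2 - p) * s) * (1 - s) ^ (2 - p) - (1 - (2 - p) * s) * (1 + s) ^ (2 - p) := by
    linear_combination ((1 - s) ^ (2 - p)) * e1 - ((1 + s) ^ (2 - p)) * e2
      - (p - 1) * s * ((1 - s) ^ (2 - p)) * e3 - (p - 1) * s * ((1 + s) ^ (2 - p)) * e4
  have := (mul_nonneg_iff_of_pos_right (mul_pos hX hY)).mp (by rw [hT]; exact hψ)
  linarith [this]

theorem f3_concave (α : ℝ) (hα : 1 < α) :
    ConcaveOn ℝ (Set.Icc (0 : ℝ) 1)
      (fun x : ℝ => (1 - Real.sqrt x) ^ (1 / α) + (1 + Real.sqrt x) ^ (1 / α)) := by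
  have hα0 : (0:ℝ) < α := by linarith
  set p : ℝ := 1 / α with hpdef
  have hp0 : 0 < p := by positivity
  have hp1 : p < 1 := by
    rw [hpdef, div_lt_one hα0]; linarith
  set f' : ℝ → ℝ := fun x =>
    (p * (1 + Real.sqrt x) ^ (p - 1) - p * (1 - Real.sqrt x) ^ (p - 1)) / (2 * Real.sqrt x)
    with hf'def
  set f'' : ℝ → ℝ := fun x =>
    (p * (p - 1) * ((1 + Real.sqrt x) ^ (p - 2) + (1 - Real.sqrt x) ^ (p - 2)) * Real.sqrt x
      - (p * (1 + Real.sqrt x) ^ (p - 1) - p * (1 - Real.sqrt x) ^ (p - 1)))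
      / (4 * x * Real.sqrt x) with hf''def
  apply concaveOn_of_hasDerivWithinAt2_nonpos (f' := f') (f'' := f'') (convex_Icc 0 1)
  · -- continuity
    have c1 : Continuous fun x : ℝ => (1 - Real.sqrt x) ^ p :=
      (continuous_const.sub Real.continuous_sqrt).rpow_const fun x => Or.inr hp0.le
    have c2 : Continuous fun x : ℝ => (1 + Real.sqrt x) ^ p :=
      (continuous_const.add Real.continuous_sqrt).rpow_const fun x => Or.inr hp0.le
    exact (c1.add c2).continuousOn
  · -- first derivative
    intro x hx
    rw [interior_Icc] at hx
    set s : ℝ := Real.sqrt x with hsdef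
    have hs0 : 0 < s := Real.sqrt_pos.mpr hx.1
    have hs1 : s < 1 := by
      rw [hsdef]
      rw [Real.sqrt_lt' one_pos]
      nlinarith [hx.2]
    have h1s : (0:ℝ) < 1 - s := by linarith
    have h2s : (0:ℝ) < 1 + s := by linarith
    have hsd : HasDerivAt Real.sqrt (1 / (2 * s)) x := Real.hasDerivAt_sqrt hx.1.ne'
    have d1 : HasDerivAt (fun y : ℝ => (1 - Real.sqrt y) ^ p)
        (-(1 / (2 * s)) * p * (1 - s) ^ (p - 1)) x :=
      (hsd.const_sub 1).rpow_const (Or.inl h1s.ne')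
    have d2 : HasDerivAt (fun y : ℝ => (1 + Real.sqrt y) ^ p)
        (1 / (2 * s) * p * (1 + s) ^ (p - 1)) x :=
      (hsd.const_add 1).rpow_const (Or.inl h2s.ne')
    have : HasDerivAt (fun y : ℝ => (1 - Real.sqrt y) ^ p + (1 + Real.sqrt y) ^ p)
        (f' x) x := by
      convert d1.add d2 using 1
      · rfl
      · rfl
      · rfl
      rw [hf'def]
      simp only [← hsdef]
      field_simp
      ring
    exact this.hasDerivWithinAt
  · -- second derivative
    intro x hx
    rw [interior_Icc] at hx
    set s : ℝ := Real.sqrt x with hsdef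
    have hs0 : 0 < s := Real.sqrt_pos.mpr hx.1
    have hs1 : s < 1 := by
      rw [hsdef]
      rw [Real.sqrt_lt' one_pos]
      nlinarith [hx.2]
    have h1s : (0:ℝ) < 1 - s := by linarith
    have h2s : (0:ℝ) < 1 + s := by linarith
    have hs2 : s * s = x := Real.mul_self_sqrt hx.1.le
    have hsd : HasDerivAt Real.sqrt (1 / (2 * s)) x := Real.hasDerivAt_sqrt hx.1.ne'
    have g1 : HasDerivAt (fun y : ℝ => (1 + Real.sqrt y) ^ (p - 1))
        (1 / (2 * s) * (p - 1) * (1 + s) ^ (p - 1 - 1)) x :=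
      (hsd.const_add 1).rpow_const (Or.inl h2s.ne')
    have g2 : HasDerivAt (fun y : ℝ => (1 - Real.sqrt y) ^ (p - 1))
        (-(1 / (2 * s)) * (p - 1) * (1 - s) ^ (p - 1 - 1)) x :=
      (hsd.const_sub 1).rpow_const (Or.inl h1s.ne')
    have hG : HasDerivAt
        (fun y : ℝ => p * (1 + Real.sqrt y) ^ (p - 1) - p * (1 - Real.sqrt y) ^ (p - 1))
        (p * (1 / (2 * s) * (p - 1) * (1 + s) ^ (p - 1 - 1))
          - p * (-(1 / (2 * s)) * (p - 1) * (1 - s) ^ (p - 1 - 1))) x :=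
      (g1.const_mul p).sub (g2.const_mul p)
    have hden : HasDerivAt (fun y : ℝ => 2 * Real.sqrt y) (2 * (1 / (2 * s))) x :=
      hsd.const_mul 2
    have hne : (2 : ℝ) * s ≠ 0 := by positivity
    have hdd : HasDerivAt f' (f'' x) x := by
      have h := hG.div hden hne
      convert h using 1
      · rfl
      · rfl
      · rfl
      have hexp : p - 1 - 1 = p - 2 := by ring
      rw [hf''def]
      simp only [← hsdef, hexp]
      rw [← hs2]
      field_simp
      ring
    exact hdd.hasDerivWithinAt
  · -- sign of second derivative
    intro x hx
    rw [interior_Icc] at hx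
    set s : ℝ := Real.sqrt x with hsdef
    have hs0 : 0 < s := Real.sqrt_pos.mpr hx.1
    have hs1 : s < 1 := by
      rw [hsdef]
      rw [Real.sqrt_lt' one_pos]
      nlinarith [hx.2]
    have hkey := key_ineq hp0 hp1 hs0 hs1
    rw [hf''def]
    apply div_nonpos_of_nonpos_of_nonneg
    · simp only [← hsdef]
      nlinarith [mul_le_mul_of_nonneg_left hkey hp0.le]
    · exact mul_nonneg (mul_nonneg (by norm_num) hx.1.le) (Real.sqrt_nonneg x)
end

section
/- For every real α with 1 < α, the function f₁ : [0,1] → ℝ defined by f₁(x) = ((1 − √x)^(1/α) + (1 + √x)^(1/α))^α is concave on the interval [0,1]. -/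
open Real

lemma sinh_smul_le {l w : ℝ} (hl0 : 0 ≤ l) (hl1 : l ≤ 1) (hw : 0 ≤ w) :
    Real.sinh (l * w) ≤ l * Real.sinh w := by
  have hd : ∀ t : ℝ, HasDerivAt (fun t => l * Real.sinh t - Real.sinh (l * t))
      (l * Real.cosh t - Real.cosh (l * t) * (l * 1)) t := fun t =>
    ((Real.hasDerivAt_sinh t).const_mul l).sub
      ((Real.hasDerivAt_sinh (l*t)).comp t ((hasDerivAt_id t).const_mul l))
  have hmono : MonotoneOn (fun t => l * Real.sinh t - Real.sinh (l * t)) (Set.Ici 0) := by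
    apply monotoneOn_of_deriv_nonneg (convex_Ici 0)
    · exact Continuous.continuousOn (by continuity)
    · exact fun t _ => (hd t).differentiableAt.differentiableWithinAt
    · intro t ht
      rw [interior_Ici] at ht
      rw [(hd t).deriv]
      have : Real.cosh (l * t) ≤ Real.cosh t := by
        rw [Real.cosh_le_cosh, abs_of_nonneg (mul_nonneg hl0 ht.le), abs_of_nonneg ht.le]
        nlinarith [mul_nonneg (sub_nonneg.2 hl1) ht.le]
      nlinarith [Real.cosh_pos t]
  have := hmono (Set.self_mem_Ici) (Set.mem_Ici.2 hw) hw
  simp only [mul_zero, Real.sinh_zero, sub_zero, sub_self] at this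
  linarith

lemma key_hyp {β w : ℝ} (hβ0 : 0 < β) (hβ1 : β < 1) (hw : 0 ≤ w) :
    Real.cosh (β * w) * Real.sinh ((1 - β) * w) ≤ (1 - β) * (Real.sinh w * Real.cosh w ^ 2) := by
  have h1 : Real.sinh ((1-β)*w) ≤ (1-β) * Real.sinh w :=
    sinh_smul_le (by linarith) (by linarith) hw
  have h2 : Real.cosh (β*w) ≤ Real.cosh w := by
    rw [Real.cosh_le_cosh, abs_of_nonneg (mul_nonneg hβ0.le hw), abs_of_nonneg hw]
    nlinarith [mul_nonneg (sub_nonneg.2 hβ1.le) hw]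
  have h3 : 0 ≤ Real.sinh ((1-β)*w) := Real.sinh_nonneg_iff.2 (mul_nonneg (by linarith) hw)
  have h4 : 1 ≤ Real.cosh w := Real.one_le_cosh w
  have h5 : 0 ≤ Real.sinh w := Real.sinh_nonneg_iff.2 hw
  calc Real.cosh (β*w) * Real.sinh ((1-β)*w) ≤ Real.cosh w * Real.sinh ((1-β)*w) :=
        mul_le_mul_of_nonneg_right h2 h3
    _ ≤ Real.cosh w * ((1-β) * Real.sinh w) :=
        mul_le_mul_of_nonneg_left h1 (Real.cosh_pos w).le
    _ ≤ Real.cosh w ^ 2 * ((1-β) * Real.sinh w) := by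
        nlinarith [mul_nonneg (mul_nonneg (Real.cosh_pos w).le (sub_nonneg.2 h4))
            (mul_nonneg (sub_nonneg.2 hβ1.le) h5)]
    _ = (1-β) * (Real.sinh w * Real.cosh w ^ 2) := by ring

lemma key_rpow {β u v : ℝ} (hu : 0 < u) (huv : u ≤ v) (hβ0 : 0 < β) (hβ1 : β < 1) :
    (u^β + v^β) * (u^(β-1) - v^(β-1)) ≤ (1-β) * (v-u) * (u+v)^2 * (u^(β-2) * v^(β-2)) / 2 := by
  have hv : 0 < v := lt_of_lt_of_le hu huv
  obtain ⟨P, rfl⟩ : ∃ p, u = Real.exp p := ⟨Real.log u, (Real.exp_log hu).symm⟩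
  obtain ⟨Q, rfl⟩ : ∃ q, v = Real.exp q := ⟨Real.log v, (Real.exp_log hv).symm⟩
  have hPQ : P ≤ Q := Real.exp_le_exp.1 huv
  have hw : (0:ℝ) ≤ (Q - P)/2 := by linarith
  have key := key_hyp hβ0 hβ1 hw
  rw [Real.cosh_eq, Real.sinh_eq, Real.sinh_eq, Real.cosh_eq] at key
  have hE : (0:ℝ) ≤ 4 * Real.exp ((2*β-1)*((P+Q)/2)) := by positivity
  have key2 := mul_le_mul_of_nonneg_left key hE
  simp only [Real.rpow_def_of_pos (Real.exp_pos _), Real.log_exp]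
  have f1 : Real.exp (β*((P+Q)/2)) * (Real.exp (β*((Q-P)/2)) + Real.exp (-(β*((Q-P)/2))))
      = Real.exp (P*β) + Real.exp (Q*β) := by
    rw [mul_add, ← Real.exp_add, ← Real.exp_add]; ring_nf
  have f2 : Real.exp ((β-1)*((P+Q)/2)) *
        (Real.exp ((1-β)*((Q-P)/2)) - Real.exp (-((1-β)*((Q-P)/2))))
      = Real.exp (P*(β-1)) - Real.exp (Q*(β-1)) := by
    rw [mul_sub, ← Real.exp_add, ← Real.exp_add]; ring_nf
  have f3 : Real.exp ((P+Q)/2) * (Real.exp ((Q-P)/2) - Real.exp (-((Q-P)/2)))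
      = Real.exp Q - Real.exp P := by
    rw [mul_sub, ← Real.exp_add, ← Real.exp_add]; ring_nf
  have f4 : Real.exp ((P+Q)/2) * (Real.exp ((Q-P)/2) + Real.exp (-((Q-P)/2)))
      = Real.exp P + Real.exp Q := by
    rw [mul_add, ← Real.exp_add, ← Real.exp_add]; ring_nf
  calc (Real.exp (P*β) + Real.exp (Q*β)) * (Real.exp (P*(β-1)) - Real.exp (Q*(β-1)))
      = 4 * Real.exp ((2*β-1)*((P+Q)/2)) *
        ((Real.exp (β*((Q-P)/2)) + Real.exp (-(β*((Q-P)/2))))/2 *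
         ((Real.exp ((1-β)*((Q-P)/2)) - Real.exp (-((1-β)*((Q-P)/2))))/2)) := by
        rw [← f1, ← f2, show (2*β-1)*((P+Q)/2) = β*((P+Q)/2) + (β-1)*((P+Q)/2) by ring,
          Real.exp_add]
        ring
    _ ≤ 4 * Real.exp ((2*β-1)*((P+Q)/2)) *
        ((1-β) * ((Real.exp ((Q-P)/2) - Real.exp (-((Q-P)/2)))/2 *
          ((Real.exp ((Q-P)/2) + Real.exp (-((Q-P)/2)))/2)^2)) := key2
    _ = (1-β) * (Real.exp Q - Real.exp P) * (Real.exp P + Real.exp Q)^2 *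
        (Real.exp (P*(β-2)) * Real.exp (Q*(β-2))) / 2 := by
        have g1 : Real.exp ((2*β-1)*((P+Q)/2)) = Real.exp (P*(β-2)+Q*(β-2)) *
            (Real.exp ((P+Q)/2) * (Real.exp ((P+Q)/2) * Real.exp ((P+Q)/2))) := by
          rw [← Real.exp_add, ← Real.exp_add, ← Real.exp_add]; ring_nf
        rw [← f3, ← f4, ← Real.exp_add, g1]
        ring

noncomputable def F1aux (α x : ℝ) : ℝ :=
  ((1 - Real.sqrt x) ^ (1/α) + (1 + Real.sqrt x) ^ (1/α)) ^ (α-1) *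
    ((1 + Real.sqrt x) ^ (1/α-1) - (1 - Real.sqrt x) ^ (1/α-1)) / (2 * Real.sqrt x)

noncomputable def F2aux (α x : ℝ) : ℝ :=
  ((1 - Real.sqrt x) ^ (1/α) + (1 + Real.sqrt x) ^ (1/α)) ^ (α-2) / (2 * Real.sqrt x)^2 *
    ((1 - 1/α) * ((1 + Real.sqrt x) ^ (1/α-1) - (1 - Real.sqrt x) ^ (1/α-1))^2
      + (1/α - 1) * ((1 - Real.sqrt x) ^ (1/α) + (1 + Real.sqrt x) ^ (1/α)) *
          ((1 - Real.sqrt x) ^ (1/α-2) + (1 + Real.sqrt x) ^ (1/α-2))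
      - ((1 - Real.sqrt x) ^ (1/α) + (1 + Real.sqrt x) ^ (1/α)) *
          ((1 + Real.sqrt x) ^ (1/α-1) - (1 - Real.sqrt x) ^ (1/α-1)) / Real.sqrt x)

lemma aux_derivs (α : ℝ) (hα : 1 < α) {x : ℝ} (hx : x ∈ Set.Ioo (0:ℝ) 1) :
    HasDerivAt (fun x : ℝ => ((1 - Real.sqrt x) ^ (1/α) + (1 + Real.sqrt x) ^ (1/α)) ^ α)
      (F1aux α x) x ∧ HasDerivAt (F1aux α) (F2aux α x) x ∧ F2aux α x ≤ 0 := by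
  obtain ⟨hx0, hx1⟩ := hx
  have hα0 : (0:ℝ) < α := by linarith
  have hβ0 : 0 < 1/α := by positivity
  have hβ1 : 1/α < 1 := by rw [div_lt_one hα0]; linarith
  have hs0 : 0 < Real.sqrt x := Real.sqrt_pos.2 hx0
  have hs1 : Real.sqrt x < 1 := by
    have := Real.sqrt_lt_sqrt hx0.le hx1
    simpa using this
  have hu : 0 < 1 - Real.sqrt x := by linarith
  have hv : 0 < 1 + Real.sqrt x := by linarith
  have hS : 0 < (1 - Real.sqrt x) ^ (1/α) + (1 + Real.sqrt x) ^ (1/α) :=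
    add_pos (Real.rpow_pos_of_pos hu _) (Real.rpow_pos_of_pos hv _)
  have hsq : HasDerivAt Real.sqrt (1/(2*Real.sqrt x)) x := Real.hasDerivAt_sqrt hx0.ne'
  have hu' : HasDerivAt (fun y => 1 - Real.sqrt y) (-(1/(2*Real.sqrt x))) x := hsq.const_sub 1
  have hv' : HasDerivAt (fun y => 1 + Real.sqrt y) (1/(2*Real.sqrt x)) x := hsq.const_add 1
  have hU := hu'.rpow_const (p := 1/α) (Or.inl hu.ne')
  have hV := hv'.rpow_const (p := 1/α) (Or.inl hv.ne')
  have hS' : HasDerivAt (fun y => (1 - Real.sqrt y) ^ (1/α) + (1 + Real.sqrt y) ^ (1/α))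
      (-(1/(2*Real.sqrt x)) * (1/α) * (1 - Real.sqrt x) ^ (1/α-1)
        + 1/(2*Real.sqrt x) * (1/α) * (1 + Real.sqrt x) ^ (1/α-1)) x := hU.add hV
  have hf0 := hS'.rpow_const (p := α) (Or.inl hS.ne')
  -- second derivative pieces
  have hP := hS'.rpow_const (p := α - 1) (Or.inl hS.ne')
  have hUu := hu'.rpow_const (p := 1/α - 1) (Or.inl hu.ne')
  have hVv := hv'.rpow_const (p := 1/α - 1) (Or.inl hv.ne')
  have hQ := hVv.sub hUu
  have hden : HasDerivAt (fun y => 2 * Real.sqrt y) (2 * (1/(2*Real.sqrt x))) x :=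
    hsq.const_mul 2
  have hF1 := (hP.mul hQ).div hden (by positivity)
  refine ⟨?_, ?_, ?_⟩
  · convert hf0 using 1
    unfold F1aux
    field_simp
    ring
  · convert hF1 using 1
    · rfl
    · rfl
    · rfl
    unfold F2aux
    simp only [Pi.mul_apply, Pi.sub_apply]
    rw [show α - 1 - 1 = α - 2 by ring, show 1/α - 1 - 1 = 1/α - 2 by ring]
    have eS : ((1 - Real.sqrt x) ^ (1/α) + (1 + Real.sqrt x) ^ (1/α)) ^ (α - 1)
        = ((1 - Real.sqrt x) ^ (1/α) + (1 + Real.sqrt x) ^ (1/α)) ^ (α - 2) *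
          ((1 - Real.sqrt x) ^ (1/α) + (1 + Real.sqrt x) ^ (1/α)) := by
      conv_lhs => rw [show α - 1 = (α - 2) + 1 by ring]
      rw [Real.rpow_add_one hS.ne']
    have eu : (1 - Real.sqrt x) ^ (1/α - 1) = (1 - Real.sqrt x) ^ (1/α - 2) * (1 - Real.sqrt x) := by
      conv_lhs => rw [show 1/α - 1 = (1/α - 2) + 1 by ring]
      rw [Real.rpow_add_one hu.ne']
    have ev : (1 + Real.sqrt x) ^ (1/α - 1) = (1 + Real.sqrt x) ^ (1/α - 2) * (1 + Real.sqrt x) := by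
      conv_lhs => rw [show 1/α - 1 = (1/α - 2) + 1 by ring]
      rw [Real.rpow_add_one hv.ne']
    rw [eS, eu, ev]
    field_simp
    ring
  · unfold F2aux
    have key := key_rpow (β := 1/α) hu (by linarith : 1 - Real.sqrt x ≤ 1 + Real.sqrt x) hβ0 hβ1
    have hle : ((1 - Real.sqrt x) ^ (1/α) + (1 + Real.sqrt x) ^ (1/α)) *
          ((1 - Real.sqrt x) ^ (1/α - 1) - (1 + Real.sqrt x) ^ (1/α - 1))
        - (1 - 1/α) * ((1 + Real.sqrt x) - (1 - Real.sqrt x)) *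
          ((1 - Real.sqrt x) + (1 + Real.sqrt x))^2 *
          ((1 - Real.sqrt x) ^ (1/α - 2) * (1 + Real.sqrt x) ^ (1/α - 2)) / 2 ≤ 0 :=
      sub_nonpos.2 key
    have h1 : 0 ≤ ((1 - Real.sqrt x) ^ (1/α) + (1 + Real.sqrt x) ^ (1/α)) ^ (α-2) /
        (2 * Real.sqrt x)^2 := by positivity
    refine mul_nonpos_of_nonneg_of_nonpos h1 ?_
    have eu : (1 - Real.sqrt x) ^ (1/α - 1) = (1 - Real.sqrt x) ^ (1/α - 2) * (1 - Real.sqrt x) := by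
      conv_lhs => rw [show 1/α - 1 = (1/α - 2) + 1 by ring]
      rw [Real.rpow_add_one hu.ne']
    have ev : (1 + Real.sqrt x) ^ (1/α - 1) = (1 + Real.sqrt x) ^ (1/α - 2) * (1 + Real.sqrt x) := by
      conv_lhs => rw [show 1/α - 1 = (1/α - 2) + 1 by ring]
      rw [Real.rpow_add_one hv.ne']
    have eu2 : (1 - Real.sqrt x) ^ ((1:ℝ)/α)
        = (1 - Real.sqrt x) ^ (1/α - 2) * ((1 - Real.sqrt x) * (1 - Real.sqrt x)) := by
      conv_lhs => rw [show 1/α = (1/α - 2) + 1 + 1 by ring]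
      rw [Real.rpow_add_one hu.ne', Real.rpow_add_one hu.ne']
      ring
    have ev2 : (1 + Real.sqrt x) ^ ((1:ℝ)/α)
        = (1 + Real.sqrt x) ^ (1/α - 2) * ((1 + Real.sqrt x) * (1 + Real.sqrt x)) := by
      conv_lhs => rw [show 1/α = (1/α - 2) + 1 + 1 by ring]
      rw [Real.rpow_add_one hv.ne', Real.rpow_add_one hv.ne']
      ring
    have hH : (1 - 1/α) * ((1 + Real.sqrt x) ^ (1/α-1) - (1 - Real.sqrt x) ^ (1/α-1))^2
        + (1/α - 1) * ((1 - Real.sqrt x) ^ (1/α) + (1 + Real.sqrt x) ^ (1/α)) *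
            ((1 - Real.sqrt x) ^ (1/α-2) + (1 + Real.sqrt x) ^ (1/α-2))
        - ((1 - Real.sqrt x) ^ (1/α) + (1 + Real.sqrt x) ^ (1/α)) *
            ((1 + Real.sqrt x) ^ (1/α-1) - (1 - Real.sqrt x) ^ (1/α-1)) / Real.sqrt x
        = (((1 - Real.sqrt x) ^ (1/α) + (1 + Real.sqrt x) ^ (1/α)) *
            ((1 - Real.sqrt x) ^ (1/α - 1) - (1 + Real.sqrt x) ^ (1/α - 1))
          - (1 - 1/α) * ((1 + Real.sqrt x) - (1 - Real.sqrt x)) *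
            ((1 - Real.sqrt x) + (1 + Real.sqrt x))^2 *
            ((1 - Real.sqrt x) ^ (1/α - 2) * (1 + Real.sqrt x) ^ (1/α - 2)) / 2) / Real.sqrt x := by
      rw [eu, ev, eu2, ev2]
      field_simp
      ring
    rw [hH]
    exact div_nonpos_of_nonpos_of_nonneg hle (Real.sqrt_nonneg x)

theorem f1_concave (α : ℝ) (hα : 1 < α) :
    ConcaveOn ℝ (Set.Icc (0 : ℝ) 1)
      (fun x : ℝ => ((1 - Real.sqrt x) ^ (1 / α) + (1 + Real.sqrt x) ^ (1 / α)) ^ α) := by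
  have hα0 : (0:ℝ) < α := by linarith
  have hβ0 : 0 < 1/α := by positivity
  refine concaveOn_of_hasDerivWithinAt2_nonpos (convex_Icc 0 1)
    (f' := F1aux α) (f'' := F2aux α) ?_ ?_ ?_ ?_
  · refine Continuous.continuousOn ?_
    refine Continuous.rpow_const ?_ (fun x => Or.inr hα0.le)
    refine Continuous.add ?_ ?_
    · exact (continuous_const.sub Real.continuous_sqrt).rpow_const (fun x => Or.inr hβ0.le)
    · exact (continuous_const.add Real.continuous_sqrt).rpow_const (fun x => Or.inr hβ0.le)
  · intro x hx
    rw [interior_Icc] at hx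
    exact (aux_derivs α hα hx).1.hasDerivWithinAt
  · intro x hx
    rw [interior_Icc] at hx
    exact (aux_derivs α hα hx).2.1.hasDerivWithinAt
  · intro x hx
    rw [interior_Icc] at hx
    exact (aux_derivs α hα hx).2.2
end

section
/- For every real α with 1 < α and every y ∈ [0,1): (1 + y)^(2 − 1/α) ≤ 1 + (2 − 1/α)·y + ((α−1)(2α−1)/(2α²))·y². -/
theorem taylor_upper_one_plus (α y : ℝ) (hα : 1 < α) (hy : y ∈ Set.Ico (0 : ℝ) 1) :
    (1 + y) ^ (2 - 1 / α) ≤ 1 + (2 - 1 / α) * y + ((α - 1) * (2 * α - 1) / (2 * α ^ 2)) * y ^ 2 := by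
  obtain ⟨hy0, hy1⟩ := hy
  have hα0 : (0 : ℝ) < α := lt_trans one_pos hα
  set p : ℝ := 2 - 1 / α with hp
  have hp1 : 1 < p := by
    have : 1 / α < 1 := by rw [div_lt_one hα0]; exact hα
    simp only [hp]; linarith
  have hp2 : p < 2 := by
    have : 0 < 1 / α := by positivity
    simp only [hp]; linarith
  have hc : (α - 1) * (2 * α - 1) / (2 * α ^ 2) = p * (p - 1) / 2 := by
    simp only [hp]; field_simp; ring
  rw [hc]
  -- g(t) = RHS - LHS
  set g : ℝ → ℝ := fun t => 1 + p * t + p * (p - 1) / 2 * t ^ 2 - (1 + t) ^ p with hg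
  have key : MonotoneOn g (Set.Icc 0 y) := by
    apply monotoneOn_of_deriv_nonneg (convex_Icc 0 y)
    · apply ContinuousOn.sub (by fun_prop)
      apply ContinuousOn.rpow_const (by fun_prop)
      intro t ht
      have : (0:ℝ) ≤ t := ht.1
      left; positivity
    · intro t ht
      rw [interior_Icc] at ht
      have ht0 : 0 < 1 + t := by have := ht.1; linarith
      have hd : HasDerivAt (fun s => (1 + s) ^ p) (p * (1 + t) ^ (p - 1)) t := by
        have h1 : HasDerivAt (fun s : ℝ => 1 + s) 1 t := by
          simpa using (hasDerivAt_id t).const_add 1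
        have h2 := (Real.hasDerivAt_rpow_const (x := 1 + t) (p := p) (Or.inl (ne_of_gt ht0))).comp t h1
        rw [mul_one] at h2; exact h2
      exact ((((hasDerivAt_const t (1:ℝ)).add ((hasDerivAt_id t).const_mul p)).add
        (((hasDerivAt_pow 2 t).const_mul (p * (p - 1) / 2)))).sub hd).differentiableAt.differentiableWithinAt
    · intro t ht
      rw [interior_Icc] at ht
      have ht0 : 0 < 1 + t := by have := ht.1; linarith
      have hd : HasDerivAt (fun s => (1 + s) ^ p) (p * (1 + t) ^ (p - 1)) t := by
        have h1 : HasDerivAt (fun s : ℝ => 1 + s) 1 t := by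
          simpa using (hasDerivAt_id t).const_add 1
        have h2 := (Real.hasDerivAt_rpow_const (x := 1 + t) (p := p) (Or.inl (ne_of_gt ht0))).comp t h1
        rw [mul_one] at h2; exact h2
      have hdg : HasDerivAt g (0 + p * 1 + p * (p - 1) / 2 * (2 * t ^ 1) - p * (1 + t) ^ (p - 1)) t :=
        (((hasDerivAt_const t (1:ℝ)).add ((hasDerivAt_id t).const_mul p)).add
          (((hasDerivAt_pow 2 t).const_mul (p * (p - 1) / 2)))).sub hd
      rw [hdg.deriv]
      have hbern : (1 + t) ^ (p - 1) ≤ 1 + (p - 1) * t := by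
        apply rpow_one_add_le_one_add_mul_self (by linarith [ht.1]) (by linarith) (by linarith)
      have hp0 : 0 < p := by linarith
      have hmul := mul_le_mul_of_nonneg_left hbern (le_of_lt hp0)
      have hring : 0 + p * 1 + p * (p - 1) / 2 * (2 * t ^ 1) = p * (1 + (p - 1) * t) := by ring
      rw [hring]
      linarith
  have h0 : g 0 ≤ g y := key (Set.left_mem_Icc.2 hy0) (Set.right_mem_Icc.2 hy0) hy0
  have hg0 : g 0 = 0 := by simp [hg, Real.rpow_natCast]
  rw [hg0] at h0
  simp only [hg] at h0
  linarith
end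

section
/- For every real α with α ≥ 2 and every y ∈ [0,1): α·(1 − y²)^(2 − 1/α)·((1 + y)^(2/α − 1) − (1 − y)^(2/α − 1)) ≥ (4 − 2α)·y. -/
open Real

private lemma sinh_convexOn : ConvexOn ℝ (Set.Ici (0:ℝ)) Real.sinh := by
  refine convexOn_of_deriv2_nonneg' (convex_Ici 0)
    Real.differentiable_sinh.differentiableOn ?_ ?_
  · rw [Real.deriv_sinh]
    exact Real.differentiable_cosh.differentiableOn
  · intro x hx
    have : deriv^[2] Real.sinh x = Real.sinh x := by
      simp [Function.iterate_succ, Real.deriv_sinh, Real.deriv_cosh]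
    rw [this, ← Real.sinh_zero]
    exact Real.sinh_le_sinh.2 hx

private lemma sinh_smul_le_s8 {s u : ℝ} (hs0 : 0 ≤ s) (hs1 : s ≤ 1) (hu : 0 ≤ u) :
    Real.sinh (s * u) ≤ s * Real.sinh u := by
  have h := sinh_convexOn.2 (Set.mem_Ici.2 hu) (Set.mem_Ici.2 le_rfl)
    hs0 (by linarith : (0:ℝ) ≤ 1 - s) (by ring)
  simpa [Real.sinh_zero] using h

private lemma key_pow {s a b : ℝ} (hs0 : 0 ≤ s) (hs1 : s ≤ 1) (ha : 0 < a) (hab : a ≤ b) :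
    (a * b) ^ ((1 - s) / 2) * (b ^ s - a ^ s) ≤ s * (b - a) := by
  have hb : 0 < b := lt_of_lt_of_le ha hab
  set m : ℝ := (Real.log a + Real.log b) / 2 with hm
  set u : ℝ := (Real.log b - Real.log a) / 2 with hu_def
  have hu : 0 ≤ u := by
    have := Real.log_le_log ha hab
    simp only [hu_def]; linarith
  have hA : a = Real.exp (m - u) := by
    rw [show m - u = Real.log a by rw [hm, hu_def]; ring, Real.exp_log ha]
  have hB : b = Real.exp (m + u) := by
    rw [show m + u = Real.log b by rw [hm, hu_def]; ring, Real.exp_log hb]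
  have hsinh := sinh_smul_le_s8 hs0 hs1 hu
  rw [Real.sinh_eq, Real.sinh_eq] at hsinh
  have hem : (0:ℝ) < Real.exp m := Real.exp_pos m
  -- rewrite powers as exponentials
  have h1 : (a * b) ^ ((1 - s) / 2) = Real.exp (m * (1 - s)) := by
    rw [hA, hB, ← Real.exp_add, ← Real.exp_mul]
    ring_nf
  have h2 : a ^ s = Real.exp ((m - u) * s) := by rw [hA, ← Real.exp_mul]
  have h3 : b ^ s = Real.exp ((m + u) * s) := by rw [hB, ← Real.exp_mul]
  rw [h1, h2, h3, hA, hB]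
  have e1 : Real.exp (m * (1 - s)) * Real.exp ((m + u) * s) = Real.exp m * Real.exp (s * u) := by
    rw [← Real.exp_add, ← Real.exp_add]; ring_nf
  have e2 : Real.exp (m * (1 - s)) * Real.exp ((m - u) * s) = Real.exp m * Real.exp (-(s * u)) := by
    rw [← Real.exp_add, ← Real.exp_add]; ring_nf
  have e3 : Real.exp (m + u) = Real.exp m * Real.exp u := by rw [← Real.exp_add]
  have e4 : Real.exp (m - u) = Real.exp m * Real.exp (-u) := by rw [← Real.exp_add]; ring_nf
  nlinarith [mul_le_mul_of_nonneg_left hsinh (le_of_lt hem)]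

theorem key_ineq_alpha_ge_two (α y : ℝ) (hα : 2 ≤ α) (hy : y ∈ Set.Ico (0 : ℝ) 1) :
    α * (1 - y ^ 2) ^ (2 - 1 / α) * ((1 + y) ^ (2 / α - 1) - (1 - y) ^ (2 / α - 1)) ≥
      (4 - 2 * α) * y := by
  obtain ⟨hy0, hy1⟩ := hy
  have hαpos : (0 : ℝ) < α := lt_of_lt_of_le two_pos hα
  have h1my : (0 : ℝ) < 1 - y := by linarith
  have h1py : (0 : ℝ) < 1 + y := by linarith
  have hsq : (1 : ℝ) - y ^ 2 = (1 - y) * (1 + y) := by ring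
  have hsqpos : (0 : ℝ) < 1 - y ^ 2 := by rw [hsq]; positivity
  have hsqle1 : (1 : ℝ) - y ^ 2 ≤ 1 := by nlinarith
  set c : ℝ := 1 / α with hc
  have hc0 : 0 < c := by positivity
  have hc2 : c ≤ 1 / 2 := by
    rw [hc]; rw [div_le_div_iff₀ hαpos two_pos]; linarith
  set s : ℝ := 1 - 2 * c with hs_def
  have hs0 : 0 ≤ s := by simp only [hs_def]; linarith
  have hs1 : s ≤ 1 := by simp only [hs_def]; linarith
  -- rewrite the sides
  have hexp : 2 / α - 1 = -s := by
    simp only [hs_def, hc]; ring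
  have h2c : 2 - 1 / α = (1 + c) + s := by simp only [hs_def, hc]; ring
  have hpy : (1 + y) ^ (2 / α - 1) = ((1 + y) ^ s)⁻¹ := by
    rw [hexp, Real.rpow_neg h1py.le]
  have hmy : (1 - y) ^ (2 / α - 1) = ((1 - y) ^ s)⁻¹ := by
    rw [hexp, Real.rpow_neg h1my.le]
  have hsplit : (1 - y ^ 2) ^ (2 - 1 / α)
      = (1 - y ^ 2) ^ (1 + c) * ((1 - y) ^ s * (1 + y) ^ s) := by
    rw [h2c, Real.rpow_add hsqpos]
    congr 1
    rw [hsq, Real.mul_rpow h1my.le h1py.le]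
  have hpys : (0:ℝ) < (1 + y) ^ s := Real.rpow_pos_of_pos h1py s
  have hmys : (0:ℝ) < (1 - y) ^ s := Real.rpow_pos_of_pos h1my s
  have hLHS : α * (1 - y ^ 2) ^ (2 - 1 / α) * ((1 + y) ^ (2 / α - 1) - (1 - y) ^ (2 / α - 1))
      = α * (1 - y ^ 2) ^ (1 + c) * ((1 - y) ^ s - (1 + y) ^ s) := by
    rw [hsplit, hpy, hmy]
    field_simp
  have hRHS : (4 - 2 * α) * y = -(α * s * (2 * y)) := by
    simp only [hs_def, hc]
    field_simp
    ring
  rw [hLHS, hRHS, ge_iff_le, neg_le, ← mul_neg, neg_sub]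
  -- goal : α * (1-y^2)^(1+c) * ((1+y)^s - (1-y)^s) ≤ α * s * (2*y)
  have hbr : 0 ≤ (1 + y) ^ s - (1 - y) ^ s := by
    have := Real.rpow_le_rpow h1my.le (by linarith : (1:ℝ) - y ≤ 1 + y) hs0
    linarith
  have hkey : (1 - y ^ 2) ^ c * ((1 + y) ^ s - (1 - y) ^ s) ≤ s * (2 * y) := by
    have h := key_pow hs0 hs1 h1my (by linarith : (1:ℝ) - y ≤ 1 + y)
    have hc_eq : (1 - s) / 2 = c := by simp only [hs_def]; ring
    rw [hc_eq, ← hsq] at h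
    convert h using 2
    ring
  have hstep : (1 - y ^ 2) ^ (1 + c) * ((1 + y) ^ s - (1 - y) ^ s)
      ≤ (1 - y ^ 2) ^ c * ((1 + y) ^ s - (1 - y) ^ s) := by
    apply mul_le_mul_of_nonneg_right _ hbr
    rw [Real.rpow_add hsqpos, Real.rpow_one]
    nlinarith [Real.rpow_pos_of_pos hsqpos c, Real.rpow_le_one hsqpos.le hsqle1 hc0.le]
  rw [mul_assoc]
  calc α * ((1 - y ^ 2) ^ (1 + c) * ((1 + y) ^ s - (1 - y) ^ s))
      ≤ α * ((1 - y ^ 2) ^ c * ((1 + y) ^ s - (1 - y) ^ s)) := by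
        apply mul_le_mul_of_nonneg_left hstep hαpos.le
    _ ≤ α * (s * (2 * y)) := mul_le_mul_of_nonneg_left hkey hαpos.le
    _ = α * s * (2 * y) := by ring
end

section
/- Let α be a real number with 1 < α < 2 and set c = 2 − 1/α. Then the function t ↦ ((1 + c·t)/(1 − c·t)) · ((1 − t)/(1 + t))^c is monotone nondecreasing on the interval [0, 1/c). -/
private lemma hasDerivAt_aux {c x : ℝ} (hc : 1 < c) (hx0 : 0 ≤ x) (hx1 : x < 1 / c) :
    HasDerivAt
      (fun t : ℝ => ((1 + c * t) / (1 - c * t)) * ((1 - t) / (1 + t)) ^ c)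
      (((c * (1 - c * x) - (1 + c * x) * (-c)) / (1 - c * x) ^ 2) * ((1 - x) / (1 + x)) ^ c
        + ((1 + c * x) / (1 - c * x)) *
          ((((-1) * (1 + x) - (1 - x) * 1) / (1 + x) ^ 2) * c * ((1 - x) / (1 + x)) ^ (c - 1)))
      x := by
  have hcpos : 0 < c := lt_trans one_pos hc
  have hcx : c * x < 1 := by
    have := (lt_div_iff₀ hcpos).mp hx1; linarith [this]
  have h1 : (0:ℝ) < 1 - c * x := by linarith
  have h3 : (0:ℝ) < 1 + x := by linarith
  have hA : HasDerivAt (fun t : ℝ => (1 + c * t) / (1 - c * t))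
      ((c * (1 - c * x) - (1 + c * x) * (-c)) / (1 - c * x) ^ 2) x := by
    have : HasDerivAt (fun t : ℝ => (1 + c * t) / (1 - c * t)) _ x := ((hasDerivAt_const x (1:ℝ)).add ((hasDerivAt_id x).const_mul c)).div
      ((hasDerivAt_const x (1:ℝ)).sub ((hasDerivAt_id x).const_mul c)) (ne_of_gt h1)
    convert this using 1 <;> simp <;> ring
  have hG : HasDerivAt (fun t : ℝ => (1 - t) / (1 + t))
      (((-1) * (1 + x) - (1 - x) * 1) / (1 + x) ^ 2) x := by
    have : HasDerivAt (fun t : ℝ => (1 - t) / (1 + t)) _ x := ((hasDerivAt_const x (1:ℝ)).sub (hasDerivAt_id x)).div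
      ((hasDerivAt_const x (1:ℝ)).add (hasDerivAt_id x)) (ne_of_gt h3)
    simpa using this
  have hGc := hG.rpow_const (Or.inr (le_of_lt hc))
  exact hA.mul hGc

theorem monotone_ratio_f3 (α : ℝ) (hα1 : 1 < α) (hα2 : α < 2) :
    MonotoneOn
      (fun t : ℝ =>
        ((1 + (2 - 1 / α) * t) / (1 - (2 - 1 / α) * t)) * ((1 - t) / (1 + t)) ^ (2 - 1 / α))
      (Set.Ico 0 (1 / (2 - 1 / α))) := by
  set c : ℝ := 2 - 1 / α with hcdef
  have hαpos : (0:ℝ) < α := by linarith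
  have hc : 1 < c := by
    have : 1 / α < 1 := by rw [div_lt_one hαpos]; exact hα1
    simp only [hcdef]; linarith
  have hcpos : (0:ℝ) < c := lt_trans one_pos hc
  apply monotoneOn_of_deriv_nonneg (convex_Ico _ _)
  · intro x hx
    exact (hasDerivAt_aux hc hx.1 hx.2).continuousAt.continuousWithinAt
  · rw [interior_Ico]
    intro x hx
    exact (hasDerivAt_aux hc (le_of_lt hx.1) hx.2).differentiableAt.differentiableWithinAt
  · rw [interior_Ico]
    intro x hx
    obtain ⟨hx0, hx1⟩ := hx
    rw [(hasDerivAt_aux hc (le_of_lt hx0) hx1).deriv]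
    have hcx : c * x < 1 := by
      have := (lt_div_iff₀ hcpos).mp hx1; linarith [this]
    have h1 : (0:ℝ) < 1 - c * x := by linarith
    have h3 : (0:ℝ) < 1 + x := by linarith
    have hx1' : x < 1 := lt_trans hx1 (by rw [div_lt_one hcpos]; exact hc)
    have h2 : (0:ℝ) < 1 - x := by linarith
    have hGpos : (0:ℝ) < (1 - x) / (1 + x) := div_pos h2 h3
    have hsplit : ((1 - x) / (1 + x)) ^ c = ((1 - x) / (1 + x)) ^ (c - 1) * ((1 - x) / (1 + x)) := by
      have h := Real.rpow_add hGpos (c - 1) 1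
      rw [Real.rpow_one, sub_add_cancel] at h
      exact h
    rw [hsplit]
    have key : ((c * (1 - c * x) - (1 + c * x) * (-c)) / (1 - c * x) ^ 2) *
          (((1 - x) / (1 + x)) ^ (c - 1) * ((1 - x) / (1 + x)))
        + ((1 + c * x) / (1 - c * x)) *
          ((((-1) * (1 + x) - (1 - x) * 1) / (1 + x) ^ 2) * c * ((1 - x) / (1 + x)) ^ (c - 1))
        = ((1 - x) / (1 + x)) ^ (c - 1) *
          (2 * c * (c ^ 2 - 1) * x ^ 2 / ((1 - c * x) ^ 2 * (1 + x) ^ 2)) := by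
      field_simp
      ring
    rw [key]
    have hpow : (0:ℝ) ≤ ((1 - x) / (1 + x)) ^ (c - 1) := Real.rpow_nonneg (le_of_lt hGpos) _
    have hnum : (0:ℝ) ≤ 2 * c * (c ^ 2 - 1) * x ^ 2 := by
      have : (0:ℝ) ≤ c ^ 2 - 1 := by nlinarith
      positivity
    exact mul_nonneg hpow (div_nonneg hnum (by positivity))
end

section
/- Let α be a real number with 1 < α < 2. Then the function t ↦ ((1 + α·t)·(1 − t)^α) / ((1 − α·t)·(1 + t)^α) is monotone nondecreasing on the interval [0, 1/α). -/
theorem monotone_ratio_f2 (α : ℝ) (hα1 : 1 < α) (hα2 : α < 2) :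
    MonotoneOn
      (fun t : ℝ => ((1 + α * t) * (1 - t) ^ α) / ((1 - α * t) * (1 + t) ^ α))
      (Set.Ico 0 (1 / α)) := by
  have hα0 : (0:ℝ) < α := lt_trans one_pos hα1
  have hinv : 1 / α < 1 := by rw [div_lt_one hα0]; exact hα1
  have key : StrictMonoOn
      (fun t : ℝ => ((1 + α * t) * (1 - t) ^ α) / ((1 - α * t) * (1 + t) ^ α))
      (Set.Ico 0 (1 / α)) := by
    apply strictMonoOn_of_deriv_pos (convex_Ico _ _)
    · apply ContinuousOn.div
      · exact (continuousOn_const.add (continuousOn_const.mul continuousOn_id)).mul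
          ((continuousOn_const.sub continuousOn_id).rpow_const fun x _ => Or.inr hα0.le)
      · exact (continuousOn_const.sub (continuousOn_const.mul continuousOn_id)).mul
          ((continuousOn_const.add continuousOn_id).rpow_const fun x _ => Or.inr hα0.le)
      · intro x hx
        have hx2 : x < 1 / α := hx.2
        have h1 : 0 < 1 - α * x := by
          have : α * x < 1 := by
            have := (lt_div_iff₀ hα0).mp hx2
            linarith
          linarith
        have h2 : (0:ℝ) < 1 + x := by
          have := hx.1
          linarith
        exact (mul_pos h1 (Real.rpow_pos_of_pos h2 α)).ne'
    · rw [interior_Ico]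
      intro t ht
      obtain ⟨ht0, ht1⟩ := ht
      have htlt1 : t < 1 := lt_trans ht1 hinv
      have h1t : (0:ℝ) < 1 - t := by linarith
      have h1pt : (0:ℝ) < 1 + t := by linarith
      have hαt : (0:ℝ) < 1 - α * t := by
        have : α * t < 1 := by
          have := (lt_div_iff₀ hα0).mp ht1
          linarith
        linarith
      have hA : (0:ℝ) < (1 - t) ^ (α - 1) := Real.rpow_pos_of_pos h1t _
      have hB : (0:ℝ) < (1 + t) ^ (α - 1) := Real.rpow_pos_of_pos h1pt _
      -- derivative of (1 - t) ^ α
      have d1 : HasDerivAt (fun t : ℝ => (1 - t) ^ α) (-(α * (1 - t) ^ (α - 1))) t := by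
        have h := Real.hasDerivAt_rpow_const (x := 1 - t) (p := α) (Or.inl h1t.ne')
        have h2 : HasDerivAt (fun t : ℝ => 1 - t) (-1) t := by
          simpa using (hasDerivAt_const t (1:ℝ)).fun_sub (hasDerivAt_id t)
        have := h.comp t h2
        simpa [mul_comm, Function.comp_def] using this
      -- derivative of (1 + t) ^ α
      have d2 : HasDerivAt (fun t : ℝ => (1 + t) ^ α) (α * (1 + t) ^ (α - 1)) t := by
        have h := Real.hasDerivAt_rpow_const (x := 1 + t) (p := α) (Or.inl h1pt.ne')
        have h2 : HasDerivAt (fun t : ℝ => 1 + t) 1 t := by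
          simpa using (hasDerivAt_const t (1:ℝ)).fun_add (hasDerivAt_id t)
        have := h.comp t h2
        simpa [mul_comm, Function.comp_def] using this
      have dN : HasDerivAt (fun t : ℝ => (1 + α * t) * (1 - t) ^ α)
          (α * (1 - t) ^ α + (1 + α * t) * (-(α * (1 - t) ^ (α - 1)))) t := by
        have hl : HasDerivAt (fun t : ℝ => 1 + α * t) α t := by
          simpa using (hasDerivAt_const t (1:ℝ)).fun_add ((hasDerivAt_id t).const_mul α)
        exact hl.mul d1
      have dD : HasDerivAt (fun t : ℝ => (1 - α * t) * (1 + t) ^ α)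
          ((-α) * (1 + t) ^ α + (1 - α * t) * (α * (1 + t) ^ (α - 1))) t := by
        have hl : HasDerivAt (fun t : ℝ => 1 - α * t) (-α) t := by
          simpa using (hasDerivAt_const t (1:ℝ)).fun_sub ((hasDerivAt_id t).const_mul α)
        exact hl.mul d2
      have hDpos : (0:ℝ) < (1 - α * t) * (1 + t) ^ α :=
        mul_pos hαt (Real.rpow_pos_of_pos h1pt α)
      have dF : HasDerivAt
          (fun t : ℝ => ((1 + α * t) * (1 - t) ^ α) / ((1 - α * t) * (1 + t) ^ α))
          (((α * (1 - t) ^ α + (1 + α * t) * (-(α * (1 - t) ^ (α - 1)))) *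
              ((1 - α * t) * (1 + t) ^ α) -
            ((1 + α * t) * (1 - t) ^ α) *
              ((-α) * (1 + t) ^ α + (1 - α * t) * (α * (1 + t) ^ (α - 1)))) /
            ((1 - α * t) * (1 + t) ^ α) ^ 2) t := dN.div dD hDpos.ne'
      rw [dF.deriv]
      have hAe : (1 - t) ^ α = (1 - t) ^ (α - 1) * (1 - t) := by
        rw [← Real.rpow_add_one h1t.ne' (α - 1)]
        ring_nf
      have hBe : (1 + t) ^ α = (1 + t) ^ (α - 1) * (1 + t) := by
        rw [← Real.rpow_add_one h1pt.ne' (α - 1)]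
        ring_nf
      rw [hAe, hBe]
      apply div_pos
      · have hnum :
            (α * ((1 - t) ^ (α - 1) * (1 - t)) +
                (1 + α * t) * (-(α * (1 - t) ^ (α - 1)))) *
              ((1 - α * t) * ((1 + t) ^ (α - 1) * (1 + t))) -
            ((1 + α * t) * ((1 - t) ^ (α - 1) * (1 - t))) *
              ((-α) * ((1 + t) ^ (α - 1) * (1 + t)) +
                (1 - α * t) * (α * (1 + t) ^ (α - 1))) =
            2 * α * t ^ 2 * (α ^ 2 - 1) * ((1 - t) ^ (α - 1) * (1 + t) ^ (α - 1)) := by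
          ring
        rw [hnum]
        have hα2' : (0:ℝ) < α ^ 2 - 1 := by nlinarith
        positivity
      · positivity
  exact key.monotoneOn
end

section
/- Let β be a real number with |β| ≥ 1, let S ∈ [2|β|, 2√(1+β²)], and set g = √(S²/4 − β²) and P± = (1 ± g)/2. Consider the unit vector ψ = √(P₊)·(φ⁺ ⊗ e₀) + √(P₋)·(φ⁻ ⊗ e₁) in ℂ² ⊗ ℂ² ⊗ ℂ², where φ± = (e₀⊗e₀ ± e₁⊗e₁)/√2. With the Pauli matrices σ_z = [[1,0],[0,−1]] and σ_x = [[0,1],[1,0]], define the observables A₀ = σ_z, A₁ = σ_x, B₀ = (β·σ_z + g·σ_x)/√(β² + g²), and B₁ = (β·σ_z − g·σ_x)/√(β² + g²). Then ⟨ψ| ((β·A₀⊗B₀ + β·A₀⊗B₁ + A₁⊗B₀ − A₁⊗B₁) ⊗ I₂) |ψ⟩ = S. -/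
set_option maxHeartbeats 2000000

open Matrix Kronecker

theorem chsh_attack_achieves_score (β S : ℝ) (hβ : 1 ≤ |β|)
    (hS : S ∈ Set.Icc (2 * |β|) (2 * Real.sqrt (1 + β ^ 2))) :
    let g : ℝ := Real.sqrt (S ^ 2 / 4 - β ^ 2)
    let Pp : ℝ := (1 + g) / 2
    let Pm : ℝ := (1 - g) / 2
    let e : Fin 2 → (Fin 2 → ℂ) := ![![1, 0], ![0, 1]]
    let φp : Fin 2 × Fin 2 → ℂ :=
      fun p => (e 0 p.1 * e 0 p.2 + e 1 p.1 * e 1 p.2) / (Real.sqrt 2 : ℂ)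
    let φm : Fin 2 × Fin 2 → ℂ :=
      fun p => (e 0 p.1 * e 0 p.2 - e 1 p.1 * e 1 p.2) / (Real.sqrt 2 : ℂ)
    let ψ : (Fin 2 × Fin 2) × Fin 2 → ℂ := fun p =>
      (Real.sqrt Pp : ℂ) * φp p.1 * e 0 p.2 + (Real.sqrt Pm : ℂ) * φm p.1 * e 1 p.2
    let σz : Matrix (Fin 2) (Fin 2) ℂ := !![1, 0; 0, -1]
    let σx : Matrix (Fin 2) (Fin 2) ℂ := !![0, 1; 1, 0]
    let A₀ := σz
    let A₁ := σx
    let B₀ : Matrix (Fin 2) (Fin 2) ℂ :=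
      ((Real.sqrt (β ^ 2 + g ^ 2) : ℂ))⁻¹ • ((β : ℂ) • σz + (g : ℂ) • σx)
    let B₁ : Matrix (Fin 2) (Fin 2) ℂ :=
      ((Real.sqrt (β ^ 2 + g ^ 2) : ℂ))⁻¹ • ((β : ℂ) • σz - (g : ℂ) • σx)
    let Bell : Matrix (Fin 2 × Fin 2) (Fin 2 × Fin 2) ℂ :=
      (β : ℂ) • (A₀ ⊗ₖ B₀) + (β : ℂ) • (A₀ ⊗ₖ B₁) + A₁ ⊗ₖ B₀ - A₁ ⊗ₖ B₁
    star ψ ⬝ᵥ (Bell ⊗ₖ (1 : Matrix (Fin 2) (Fin 2) ℂ)).mulVec ψ = (S : ℂ) := by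
  obtain ⟨hS1, hS2⟩ := hS
  intro g Pp Pm e φp φm ψ σz σx A₀ A₁ B₀ B₁ Bell
  have hb1 : (1:ℝ) ≤ β ^ 2 := by nlinarith [sq_abs β]
  have hSpos : (0:ℝ) < S := lt_of_lt_of_le (by nlinarith) hS1
  have hg2 : g ^ 2 = S ^ 2 / 4 - β ^ 2 := Real.sq_sqrt (by nlinarith [sq_abs β])
  have ht : Real.sqrt (β ^ 2 + g ^ 2) = S / 2 := by
    rw [hg2, show β ^ 2 + (S ^ 2 / 4 - β ^ 2) = (S/2)^2 by ring]
    exact Real.sqrt_sq (by positivity)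
  have hg0 : 0 ≤ g := Real.sqrt_nonneg _
  have hg1 : g ≤ 1 := by
    nlinarith [Real.sq_sqrt (by positivity : (0:ℝ) ≤ 1 + β ^ 2), Real.sqrt_nonneg (1 + β ^ 2), hg2]
  have ha : (Real.sqrt Pp) ^ 2 = Pp := Real.sq_sqrt (by simp only [Pp]; linarith)
  have hb : (Real.sqrt Pm) ^ 2 = Pm := Real.sq_sqrt (by simp only [Pm]; linarith)
  have hr : (Real.sqrt 2) ^ 2 = 2 := Real.sq_sqrt (by norm_num)
  have hr0 : Real.sqrt 2 ≠ 0 := by positivity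
  simp only [ψ, Bell, A₀, A₁, B₀, B₁, σz, σx, φp, φm, e, ht, mulVec, dotProduct,
    Fin.sum_univ_two, Fintype.sum_prod_type, kroneckerMap_apply, Matrix.one_apply,
    Pi.star_apply, star_add, star_mul', Matrix.cons_val', Matrix.cons_val_zero,
    Matrix.cons_val_one, Matrix.head_cons, Matrix.head_fin_const, Matrix.empty_val',
    Matrix.cons_val_fin_one, Matrix.smul_apply, Matrix.add_apply, Matrix.sub_apply,
    smul_eq_mul]
  norm_num
  ring_nf
  have hA : ((Real.sqrt Pp : ℝ) : ℂ) ^ 2 = 1/2 + (g:ℂ) * (1/2) := by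
    rw [← Complex.ofReal_pow, ha]; push_cast [Pp]; ring
  have hB : ((Real.sqrt Pm : ℝ) : ℂ) ^ 2 = 1/2 - (g:ℂ) * (1/2) := by
    rw [← Complex.ofReal_pow, hb]; push_cast [Pm]; ring
  have hR : (((Real.sqrt 2 : ℝ) : ℂ))⁻¹ ^ 2 = 1/2 := by
    rw [inv_pow, ← Complex.ofReal_pow, hr]; norm_num
  have hSC : (S : ℂ) ≠ 0 := by exact_mod_cast hSpos.ne'
  have key : (β:ℂ)^2 + (g:ℂ)^2 = (S:ℂ)^2/4 := by
    have h : β^2 + g^2 = S^2/4 := by rw [hg2]; ring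
    exact_mod_cast h
  rw [hA, hB, hR]
  field_simp
  linear_combination 16 * key
end

section
/- Let α > 1 and g ∈ (0,1) be real. Define ψ₌ = (1,0), ψ≠ = (g, √(1−g²)), v₁ = (−√((1−g)/2), √((1+g)/2)), v₂ = (√((1+g)/2), √((1−g)/2)) in ℝ², let σ_AE be the 4×4 matrix (1/2)·E₀₀ ⊗ |ψ₌⟩⟨ψ₌| + (1/2)·E₁₁ ⊗ |ψ≠⟩⟨ψ≠| (where E₀₀, E₁₁ are the diagonal matrix units and ⊗ is the Kronecker product), and let M = ((1−g)/2)^((1−α)/(2α))·|v₁⟩⟨v₁| + ((1+g)/2)^((1−α)/(2α))·|v₂⟩⟨v₂|. Define w = −((1−g)/2)^(1/(2α))·v₁ + ((1+g)/2)^(1/(2α))·v₂ and w′ = ((1−g)/2)^(1/(2α))·v₁ + ((1+g)/2)^(1/(2α))·v₂, and set φ = ((1−g)/2)^(1/α) + ((1+g)/2)^(1/α). Then (I₂ ⊗ M)·σ_AE·(I₂ ⊗ M) = (1/2)·(E₀₀ ⊗ |w⟩⟨w| + E₁₁ ⊗ |w′⟩⟨w′|), and ‖w‖² = ‖w′‖²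 = φ. -/
open Matrix Kronecker

/-! With `c = √((1 - g) / 2)` and `s = √((1 + g) / 2)` one has `c² + s² = 1`, so
`v₁ = (-c, s)`, `v₂ = (s, c)` is an orthonormal basis and `ψ≠ = (s² - c², 2cs)` is a
double-angle vector. Hence `v₁ ⬝ ψ₌ = -c`, `v₂ ⬝ ψ₌ = s`, `v₁ ⬝ ψ≠ = c`, `v₂ ⬝ ψ≠ = s`, and since
`λ ^ ((1 - α) / (2α)) * √λ = λ ^ (1 / (2α))`, the symmetric matrix `M` sends `ψ₌` to `w` and
`ψ≠` to `w'`. Conjugating `E ⊗ |ψ⟩⟨ψ|` by `1 ⊗ M` gives `E ⊗ |Mψ⟩⟨Mψ|`, and orthonormality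
gives `‖w‖² = ‖w'‖² = φ`. -/

namespace Matrix

variable {R : Type*} [CommSemiring R] {l n : Type*}

theorem isSymm_vecMulVec_self (v : n → R) : (vecMulVec v v).IsSymm :=
  transpose_vecMulVec v v

theorem one_kronecker_mul_kronecker_vecMulVec_mul_one_kronecker [Fintype n] [Fintype l]
    [DecidableEq l] {M : Matrix n n R} (hM : M.IsSymm) (E : Matrix l l R) (u v : n → R) :
    ((1 : Matrix l l R) ⊗ₖ M) * (E ⊗ₖ vecMulVec u v) * ((1 : Matrix l l R) ⊗ₖ M) =
      E ⊗ₖ vecMulVec (M *ᵥ u) (M *ᵥ v) := by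
  rw [← mul_kronecker_mul, ← mul_kronecker_mul, one_mul, mul_one, mul_vecMulVec,
    vecMulVec_mul, ← mulVec_transpose, hM.eq]

theorem add_smul_vecMulVec_mulVec [Fintype n] (a b : R) (v₁ v₂ u : n → R) :
    (a • vecMulVec v₁ v₁ + b • vecMulVec v₂ v₂) *ᵥ u =
      (a * (v₁ ⬝ᵥ u)) • v₁ + (b * (v₂ ⬝ᵥ u)) • v₂ := by
  simp only [add_mulVec, smul_mulVec, vecMulVec_mulVec, op_smul_eq_smul, smul_smul]

theorem dotProduct_add_smul_self_of_orthonormal [Fintype n] {v₁ v₂ : n → R} (h₁ : v₁ ⬝ᵥ v₁ = 1)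
    (h₂ : v₂ ⬝ᵥ v₂ = 1) (h₁₂ : v₁ ⬝ᵥ v₂ = 0) (x y : R) :
    (x • v₁ + y • v₂) ⬝ᵥ (x • v₁ + y • v₂) = x * x + y * y := by
  simp only [add_dotProduct, dotProduct_add, smul_dotProduct, dotProduct_smul, smul_eq_mul,
    h₁, h₂, h₁₂, dotProduct_comm v₂ v₁]
  ring

end Matrix

section RotationFrame

variable {R : Type*} [CommRing R] {c s : R}

theorem rotationFrame_orthonormal (h : c ^ 2 + s ^ 2 = 1) :
    ![-c, s] ⬝ᵥ ![-c, s] = 1 ∧ ![s, c] ⬝ᵥ ![s, c] = 1 ∧ ![-c, s] ⬝ᵥ ![s, c] = 0 := by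
  simp only [dotProduct, Fin.sum_univ_two, cons_val_zero, cons_val_one]
  exact ⟨by linear_combination h, by linear_combination h, by ring⟩

theorem rotationFrame_spectral_mulVec_basis (a b : R) :
    (a • vecMulVec ![-c, s] ![-c, s] + b • vecMulVec ![s, c] ![s, c]) *ᵥ ![1, 0] =
      -((a * c) • ![-c, s]) + (b * s) • ![s, c] := by
  rw [add_smul_vecMulVec_mulVec, ← neg_smul]
  simp

theorem rotationFrame_spectral_mulVec_doubleAngle (h : c ^ 2 + s ^ 2 = 1) (a b : R) :
    (a • vecMulVec ![-c, s] ![-c, s] + b • vecMulVec ![s, c] ![s, c]) *ᵥ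
        ![s ^ 2 - c ^ 2, 2 * c * s] =
      (a * c) • ![-c, s] + (b * s) • ![s, c] := by
  have h₁ : ![-c, s] ⬝ᵥ ![s ^ 2 - c ^ 2, 2 * c * s] = c := by
    simp only [dotProduct, Fin.sum_univ_two, cons_val_zero, cons_val_one]
    linear_combination c * h
  have h₂ : ![s, c] ⬝ᵥ ![s ^ 2 - c ^ 2, 2 * c * s] = s := by
    simp only [dotProduct, Fin.sum_univ_two, cons_val_zero, cons_val_one]
    linear_combination s * h
  rw [add_smul_vecMulVec_mulVec, h₁, h₂]

end RotationFrame

namespace Real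

theorem rpow_mul_sqrt_eq_rpow_one_div_two_mul {x : ℝ} (hx : 0 ≤ x) {α : ℝ} (hα : α ≠ 0) :
    x ^ ((1 - α) / (2 * α)) * √x = x ^ (1 / (2 * α)) := by
  have hexp : (1 - α) / (2 * α) + 1 / 2 = 1 / (2 * α) := by field_simp; ring
  rw [sqrt_eq_rpow, ← rpow_add' hx (by rw [hexp]; positivity), hexp]

theorem rpow_one_div_two_mul_mul_self {x : ℝ} (hx : 0 ≤ x) (α : ℝ) :
    x ^ (1 / (2 * α)) * x ^ (1 / (2 * α)) = x ^ (1 / α) := by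
  rw [← sq, ← rpow_two, ← rpow_mul hx]
  congr 1
  ring

theorem sqrt_half_angle_identities {g : ℝ} (hg : g ∈ Set.Icc (-1 : ℝ) 1) :
    √((1 - g) / 2) ^ 2 + √((1 + g) / 2) ^ 2 = 1 ∧
      g = √((1 + g) / 2) ^ 2 - √((1 - g) / 2) ^ 2 ∧
      √(1 - g ^ 2) = 2 * √((1 - g) / 2) * √((1 + g) / 2) := by
  obtain ⟨hg₀, hg₁⟩ := hg
  rw [sq_sqrt (by linarith), sq_sqrt (by linarith)]
  refine ⟨by ring, by ring, ?_⟩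
  rw [← sqrt_sq (by positivity : 0 ≤ 2 * √((1 - g) / 2) * √((1 + g) / 2)), mul_pow, mul_pow,
    sq_sqrt (by linarith), sq_sqrt (by linarith)]
  congr 1
  ring

end Real

theorem sandwiched_conjugation_identity (α g : ℝ) (hα : 1 < α) (hg : g ∈ Set.Ioo (0 : ℝ) 1) :
    let ψeq : Fin 2 → ℝ := ![1, 0]
    let ψneq : Fin 2 → ℝ := ![g, Real.sqrt (1 - g ^ 2)]
    let v₁ : Fin 2 → ℝ := ![-(Real.sqrt ((1 - g) / 2)), Real.sqrt ((1 + g) / 2)]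
    let v₂ : Fin 2 → ℝ := ![Real.sqrt ((1 + g) / 2), Real.sqrt ((1 - g) / 2)]
    let E₀₀ : Matrix (Fin 2) (Fin 2) ℝ := !![1, 0; 0, 0]
    let E₁₁ : Matrix (Fin 2) (Fin 2) ℝ := !![0, 0; 0, 1]
    let σAE : Matrix (Fin 2 × Fin 2) (Fin 2 × Fin 2) ℝ :=
      (1 / 2 : ℝ) • (E₀₀ ⊗ₖ Matrix.vecMulVec ψeq ψeq) +
        (1 / 2 : ℝ) • (E₁₁ ⊗ₖ Matrix.vecMulVec ψneq ψneq)
    let M : Matrix (Fin 2) (Fin 2) ℝ :=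
      (((1 - g) / 2) ^ ((1 - α) / (2 * α))) • Matrix.vecMulVec v₁ v₁ +
        (((1 + g) / 2) ^ ((1 - α) / (2 * α))) • Matrix.vecMulVec v₂ v₂
    let w : Fin 2 → ℝ :=
      -((((1 - g) / 2) ^ (1 / (2 * α))) • v₁) + (((1 + g) / 2) ^ (1 / (2 * α))) • v₂
    let w' : Fin 2 → ℝ :=
      (((1 - g) / 2) ^ (1 / (2 * α))) • v₁ + (((1 + g) / 2) ^ (1 / (2 * α))) • v₂
    let φ : ℝ := ((1 - g) / 2) ^ (1 / α) + ((1 + g) / 2) ^ (1 / α)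
    ((1 : Matrix (Fin 2) (Fin 2) ℝ) ⊗ₖ M) * σAE * ((1 : Matrix (Fin 2) (Fin 2) ℝ) ⊗ₖ M) =
        (1 / 2 : ℝ) • (E₀₀ ⊗ₖ Matrix.vecMulVec w w + E₁₁ ⊗ₖ Matrix.vecMulVec w' w') ∧
      w ⬝ᵥ w = φ ∧ w' ⬝ᵥ w' = φ := by
  intro ψeq ψneq v₁ v₂ E₀₀ E₁₁ σAE M w w' φ
  obtain ⟨hg₀, hg₁⟩ := hg
  have hα₀ : α ≠ 0 := by positivity
  have ha : 0 ≤ (1 - g) / 2 := by linarith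
  have hb : 0 ≤ (1 + g) / 2 := by linarith
  obtain ⟨hcs, hg_eq, hsqrt⟩ := Real.sqrt_half_angle_identities ⟨by linarith, hg₁.le⟩
  set c := √((1 - g) / 2)
  set s := √((1 + g) / 2)
  have hψneq : ψneq = ![s ^ 2 - c ^ 2, 2 * c * s] := by rw [← hg_eq, ← hsqrt]
  obtain ⟨hv₁, hv₂, hv₁₂⟩ : v₁ ⬝ᵥ v₁ = 1 ∧ v₂ ⬝ᵥ v₂ = 1 ∧ v₁ ⬝ᵥ v₂ = 0 :=
    rotationFrame_orthonormal hcs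
  have hM : M.IsSymm :=
    ((isSymm_vecMulVec_self v₁).smul _).add ((isSymm_vecMulVec_self v₂).smul _)
  have hMψeq : M *ᵥ ψeq = w := by
    rw [rotationFrame_spectral_mulVec_basis, Real.rpow_mul_sqrt_eq_rpow_one_div_two_mul ha hα₀,
      Real.rpow_mul_sqrt_eq_rpow_one_div_two_mul hb hα₀]
  have hMψneq : M *ᵥ ψneq = w' := by
    rw [hψneq, rotationFrame_spectral_mulVec_doubleAngle hcs,
      Real.rpow_mul_sqrt_eq_rpow_one_div_two_mul ha hα₀,
      Real.rpow_mul_sqrt_eq_rpow_one_div_two_mul hb hα₀]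
  refine ⟨?_, ?_, ?_⟩
  · simp only [σAE, Matrix.mul_add, Matrix.add_mul, Matrix.mul_smul, Matrix.smul_mul,
      one_kronecker_mul_kronecker_vecMulVec_mul_one_kronecker hM, hMψeq, hMψneq, smul_add]
  · simp only [w, ← neg_smul]
    rw [dotProduct_add_smul_self_of_orthonormal hv₁ hv₂ hv₁₂, neg_mul_neg,
      Real.rpow_one_div_two_mul_mul_self ha, Real.rpow_one_div_two_mul_mul_self hb]
  · rw [dotProduct_add_smul_self_of_orthonormal hv₁ hv₂ hv₁₂,
      Real.rpow_one_div_two_mul_mul_self ha, Real.rpow_one_div_two_mul_mul_self hb]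
end

section
/- Let α ∈ (1,2) and g ∈ (0,1) be real. Define ψ₌ = (1,0), ψ≠ = (g, √(1−g²)), v₁ = (−√((1−g)/2), √((1+g)/2)), v₂ = (√((1+g)/2), √((1−g)/2)) in ℝ², and let N = ((1−g)/2)^(1−α)·|v₁⟩⟨v₁| + ((1+g)/2)^(1−α)·|v₂⟩⟨v₂|. Then Tr[(E₀₀ ⊗ |ψ₌⟩⟨ψ₌| + E₁₁ ⊗ |ψ≠⟩⟨ψ≠|)·(I₂ ⊗ N)] = 2·(((1−g)/2)^(2−α) + ((1+g)/2)^(2−α)). -/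
open Matrix Kronecker

theorem petz_trace_identity (α g : ℝ) (hα : α ∈ Set.Ioo (1 : ℝ) 2) (hg : g ∈ Set.Ioo (0 : ℝ) 1) :
    let ψeq : Fin 2 → ℝ := ![1, 0]
    let ψneq : Fin 2 → ℝ := ![g, Real.sqrt (1 - g ^ 2)]
    let v₁ : Fin 2 → ℝ := ![-(Real.sqrt ((1 - g) / 2)), Real.sqrt ((1 + g) / 2)]
    let v₂ : Fin 2 → ℝ := ![Real.sqrt ((1 + g) / 2), Real.sqrt ((1 - g) / 2)]
    let E₀₀ : Matrix (Fin 2) (Fin 2) ℝ := !![1, 0; 0, 0]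
    let E₁₁ : Matrix (Fin 2) (Fin 2) ℝ := !![0, 0; 0, 1]
    let N : Matrix (Fin 2) (Fin 2) ℝ :=
      (((1 - g) / 2) ^ (1 - α)) • Matrix.vecMulVec v₁ v₁ +
        (((1 + g) / 2) ^ (1 - α)) • Matrix.vecMulVec v₂ v₂
    Matrix.trace
        ((E₀₀ ⊗ₖ Matrix.vecMulVec ψeq ψeq + E₁₁ ⊗ₖ Matrix.vecMulVec ψneq ψneq) *
          ((1 : Matrix (Fin 2) (Fin 2) ℝ) ⊗ₖ N)) =
      2 * (((1 - g) / 2) ^ (2 - α) + ((1 + g) / 2) ^ (2 - α)) := by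
  obtain ⟨hg0, hg1⟩ := hg
  intro ψeq ψneq v₁ v₂ E₀₀ E₁₁ N
  have ha : (0:ℝ) < (1 - g) / 2 := by linarith
  have hb : (0:ℝ) < (1 + g) / 2 := by linarith
  have hA : ((1 - g) / 2) ^ (2 - α) = ((1 - g) / 2) ^ (1 - α) * ((1 - g) / 2) := by
    rw [show (2:ℝ) - α = (1 - α) + 1 by ring, Real.rpow_add_one ha.ne']
  have hB : ((1 + g) / 2) ^ (2 - α) = ((1 + g) / 2) ^ (1 - α) * ((1 + g) / 2) := by
    rw [show (2:ℝ) - α = (1 - α) + 1 by ring, Real.rpow_add_one hb.ne']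
  set A := ((1 - g) / 2) ^ (1 - α) with hAdef
  set B := ((1 + g) / 2) ^ (1 - α) with hBdef
  set sa := Real.sqrt ((1 - g) / 2) with hsadef
  set sb := Real.sqrt ((1 + g) / 2) with hsbdef
  have hsa : sa ^ 2 = (1 - g) / 2 := Real.sq_sqrt ha.le
  have hsb : sb ^ 2 = (1 + g) / 2 := Real.sq_sqrt hb.le
  have hs : Real.sqrt (1 - g ^ 2) = 2 * (sa * sb) := by
    rw [show 1 - g ^ 2 = (2 * (sa * sb)) ^ 2 by nlinarith [hsa, hsb],
      Real.sqrt_sq (by positivity)]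
  rw [hA, hB]
  simp only [N, E₀₀, E₁₁, ψeq, ψneq, v₁, v₂, hs, Matrix.trace, Matrix.diag, Matrix.mul_apply,
    Fintype.sum_prod_type, Fin.sum_univ_two, Matrix.kroneckerMap_apply, Matrix.add_apply,
    Matrix.smul_apply, Matrix.vecMulVec_apply, Matrix.one_apply, smul_eq_mul,
    Matrix.cons_val_zero, Matrix.cons_val_one, Matrix.head_cons, Matrix.cons_val',
    Matrix.head_fin_const, Matrix.empty_val', Matrix.cons_val_fin_one, Matrix.of_apply, Matrix.one_apply_eq, if_true]
  have e1 : Real.sqrt (1 - g) / Real.sqrt 2 = sa := by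
    rw [hsadef, Real.sqrt_div (by linarith : (0:ℝ) ≤ 1 - g)]
  have e2 : Real.sqrt (1 + g) / Real.sqrt 2 = sb := by
    rw [hsbdef, Real.sqrt_div (by linarith : (0:ℝ) ≤ 1 + g)]
  norm_num [e1, e2, hAdef, hBdef] at *
  linear_combination (A * (1 + g^2) + 4*g*sb^2*(B - A) + 4*A*sb^4
      + 4*B*sb^2*(sa^2 + (1 - g)/2)) * hsa
    + (4*((1 - g)/2)*A*(sb^2 + (1 + g)/2) + 4*((1 - g)/2)*g*(B - A)
      + 4*B*((1 - g)/2)^2 + B*(1 + g^2)) * hsb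
end

section
/- Define for real α > 1 and g ∈ [0,1] the quantity F(α,g) = 1 + (α/(1−α))·log₂(((1−g)/2)^(1/α) + ((1+g)/2)^(1/α)). Then: (i) for every g ∈ [0,1), the limit of F(α,g) as α → ∞ equals 0; and (ii) for g = 1, F(α,1) = 1 for every α > 1. In particular the limiting rate function α → ∞ is discontinuous in g at g = 1, equal to 0 on [0,1) and to 1 at g = 1. -/
open Filter Real

lemma aux_rpow_tendsto (a : ℝ) (ha : 0 < a) :
    Tendsto (fun α : ℝ => a ^ (1 / α)) atTop (nhds 1) := by
  have hinv : Tendsto (fun α : ℝ => 1 / α) atTop (nhds 0) := by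
    simpa [one_div] using tendsto_inv_atTop_zero
  have hc : ContinuousAt (fun t : ℝ => a ^ t) 0 :=
    Real.continuousAt_const_rpow ha.ne'
  simpa [Real.rpow_zero, Function.comp_def] using hc.tendsto.comp hinv

lemma aux_ratio_tendsto :
    Tendsto (fun α : ℝ => α / (1 - α)) atTop (nhds (-1)) := by
  have ht : Tendsto (fun α : ℝ => α - 1) atTop atTop :=
    tendsto_atTop_add_const_right _ _ tendsto_id
  have h1 : Tendsto (fun α : ℝ => 1 / (1 - α)) atTop (nhds 0) := by
    have := ht.inv_tendsto_atTop.neg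
    simp only [neg_zero] at this
    refine this.congr fun α => ?_
    show -(α - 1)⁻¹ = 1 / (1 - α)
    rw [one_div, ← inv_neg, neg_sub]
  have h2 : Tendsto (fun α : ℝ => -1 + 1 / (1 - α)) atTop (nhds (-1)) := by
    simpa using (tendsto_const_nhds.add h1)
  refine h2.congr' ?_
  filter_upwards [eventually_gt_atTop (1:ℝ)] with α hα
  have hne : (1 - α) ≠ 0 := by linarith
  field_simp
  ring

theorem rate_function_limit_alpha_infty :
    (∀ g : ℝ, g ∈ Set.Ico (0 : ℝ) 1 →
        Filter.Tendsto
          (fun α : ℝ =>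
            1 + (α / (1 - α)) *
              Real.logb 2 (((1 - g) / 2) ^ (1 / α) + ((1 + g) / 2) ^ (1 / α)))
          Filter.atTop (nhds 0)) ∧
      (∀ α : ℝ, 1 < α →
        1 + (α / (1 - α)) *
            Real.logb 2 (((1 - (1 : ℝ)) / 2) ^ (1 / α) + ((1 + (1 : ℝ)) / 2) ^ (1 / α)) = 1) := by
  constructor
  · intro g hg
    obtain ⟨hg0, hg1⟩ := hg
    have h1 : (0:ℝ) < (1 - g)/2 := by linarith
    have h2 : (0:ℝ) < (1 + g)/2 := by linarith
    have hsum : Tendsto (fun α : ℝ =>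
        ((1 - g) / 2) ^ (1 / α) + ((1 + g) / 2) ^ (1 / α)) atTop (nhds 2) := by
      have h := (aux_rpow_tendsto _ h1).add (aux_rpow_tendsto _ h2)
      convert h using 2
      norm_num
    have hlog : Tendsto (fun α : ℝ =>
        Real.logb 2 (((1 - g) / 2) ^ (1 / α) + ((1 + g) / 2) ^ (1 / α))) atTop (nhds 1) := by
      have hc : ContinuousAt (Real.logb 2) 2 := by
        unfold Real.logb
        exact (Real.continuousAt_log (by norm_num)).div_const _
      simpa [Real.logb_self_eq_one, Function.comp_def] using hc.tendsto.comp hsum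
    have hfin := (tendsto_const_nhds : Tendsto (fun _ : ℝ => (1:ℝ)) atTop (nhds 1)).add
      (aux_ratio_tendsto.mul hlog)
    simpa using hfin
  · intro α hα
    have h0 : (0:ℝ) < 1 / α := by positivity
    rw [show ((1 - (1:ℝ)) / 2) = 0 by norm_num, Real.zero_rpow (ne_of_gt h0),
      show ((1 + (1:ℝ)) / 2) = 1 by norm_num, Real.one_rpow]
    norm_num
end

section
/- For every real S ∈ [2, 2√2], setting g = √(S²/4 − 1), the identity 1 + (2/(1−2))·log₂(((1−g)/2)^(1/2) + ((1+g)/2)^(1/2)) = 1 − log₂(1 + √(2 − S²/4)) holds; that is, the down-arrow sandwiched Rényi rate function formula at α = 2 coincides with the min-entropy rate function f_{H_min}(S) = 1 − log₂(1 + √(2 − S²/4)). -/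
/-!
With `a = (1 - g) / 2` and `b = (1 + g) / 2` we have `a + b = 1` and `4ab = 1 - g²`, so
`(√a + √b)² = 1 + √(1 - g²)`; hence the `α = 2` Rényi expression `1 - 2 log₂ (√a + √b)`
is `1 - log₂ (1 + √(1 - g²))`, and `1 - g² = 2 - S²/4` for `g = √(S²/4 - 1)`.
-/

open Real

lemma Real.logb_sqrt {b x : ℝ} (hx : 0 ≤ x) : logb b (√x) = logb b x / 2 := by
  rw [logb, logb, log_sqrt hx, div_right_comm]

lemma sqrt_half_sub_add_sqrt_half_add_sq {g : ℝ} (hg : g ^ 2 ≤ 1) :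
    (√((1 - g) / 2) + √((1 + g) / 2)) ^ 2 = 1 + √(1 - g ^ 2) := by
  have hg₁ : g ≤ 1 := by nlinarith
  have hg₂ : -1 ≤ g := by nlinarith
  have hprod : √((1 - g) / 2) * √((1 + g) / 2) = √(1 - g ^ 2) / 2 := by
    rw [← sqrt_mul (by linarith), show (1 - g) / 2 * ((1 + g) / 2) = (1 - g ^ 2) / 2 ^ 2 by ring,
      sqrt_div' _ (by positivity), sqrt_sq zero_le_two]
  rw [add_sq, mul_assoc, hprod, sq_sqrt (by linarith), sq_sqrt (by linarith)]
  ring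

lemma sqrt_half_sub_add_sqrt_half_add {g : ℝ} (hg : g ^ 2 ≤ 1) :
    √((1 - g) / 2) + √((1 + g) / 2) = √(1 + √(1 - g ^ 2)) := by
  rw [← sqrt_half_sub_add_sqrt_half_add_sq hg, sqrt_sq (by positivity)]

theorem rate_function_alpha_two_eq_min_entropy (S : ℝ)
    (hS : S ∈ Set.Icc (2 : ℝ) (2 * Real.sqrt 2)) :
    let g : ℝ := Real.sqrt (S ^ 2 / 4 - 1)
    1 + ((2 : ℝ) / (1 - 2)) *
        Real.logb 2 (((1 - g) / 2) ^ ((1 : ℝ) / 2) + ((1 + g) / 2) ^ ((1 : ℝ) / 2)) =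
      1 - Real.logb 2 (1 + Real.sqrt (2 - S ^ 2 / 4)) := by
  intro g
  obtain ⟨hS₁, hS₂⟩ := hS
  have hS_sq : S ^ 2 / 4 ≤ 2 := by nlinarith [sq_sqrt (zero_le_two : (0 : ℝ) ≤ 2)]
  have hg_sq : g ^ 2 = S ^ 2 / 4 - 1 := sq_sqrt (by nlinarith)
  have hg_le : g ^ 2 ≤ 1 := by linarith
  rw [← sqrt_eq_rpow, ← sqrt_eq_rpow, sqrt_half_sub_add_sqrt_half_add hg_le,
    logb_sqrt (by positivity), hg_sq]
  ring_nf
end
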